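/- arXiv:1812.01814 — 6 statements merged into one kernel-verified Lean document; each statement's English description precedes it below -/
import Mathlib

section
/- (Dohmen's theorem.) Let H = (V, E) be a hypergraph in the family L1. Then for every real polynomial p such that for every positive integer k, p(k) equals the number of weak proper k-colorings of H, and for every real number λ < 0, one has (-1)^{|V|} · p(λ) > 0. -/
open Finset Polynomial

variable {α : Type}

/-- `φ : α → Fin k` is a weak proper coloring of the hypergraph with edge set `E`:
every edge contains two vertices with different colors. -/
def IsWeakProper [DecidableEq α] (E : Finset (Finset α)) {k : ℕ} (φ : α → Fin k) : Prop :=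
  ∀ e ∈ E, ∃ u ∈ e, ∃ v ∈ e, φ u ≠ φ v

instance [DecidableEq α] (E : Finset (Finset α)) {k : ℕ} (φ : α → Fin k) :
    Decidable (IsWeakProper E φ) := by
  unfold IsWeakProper; infer_instance

/-- The number of weak proper `k`-colorings of the hypergraph with vertex set `α`
(a finite type) and edge set `E`. -/
def countColorings [Fintype α] [DecidableEq α] (E : Finset (Finset α)) (k : ℕ) : ℕ :=
  (Finset.univ.filter fun φ : α → Fin k => IsWeakProper E φ).card

/-- `(v 0, es 0, v 1, es 1, …, v (t-1), es (t-1), v 0)` is a cycle in the hypergraph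
with edge set `E`: `t ≥ 2`, the vertices are pairwise distinct, the edges are pairwise
distinct edges of `E`, and `{v i, v (i+1)} ⊆ es i` for every `i` (cyclically). -/
def IsCycle (E : Finset (Finset α)) (t : ℕ) (v : ZMod t → α) (es : ZMod t → Finset α) : Prop :=
  2 ≤ t ∧ Function.Injective v ∧ Function.Injective es ∧
    (∀ i, es i ∈ E) ∧ ∀ i, v i ∈ es i ∧ v (i + 1) ∈ es i

/-- Membership in the family `L0`: every edge has even cardinality, and for every cycle
there exist two distinct vertices `x, y` in the union of the edges of the cycle with
`{x, y} ∈ E`. -/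
def MemL0 [DecidableEq α] (E : Finset (Finset α)) : Prop :=
  (∀ e ∈ E, Even e.card) ∧
    ∀ (t : ℕ) (v : ZMod t → α) (es : ZMod t → Finset α), IsCycle E t v es →
      ∃ x y : α, x ≠ y ∧ (∃ i, x ∈ es i) ∧ (∃ j, y ∈ es j) ∧ ({x, y} : Finset α) ∈ E

/-- Membership in the family `L1`: every edge has even cardinality, and every cycle
contains an edge of cardinality `2`. -/
def MemL1 (E : Finset (Finset α)) : Prop :=
  (∀ e ∈ E, Even e.card) ∧
    ∀ (t : ℕ) (v : ZMod t → α) (es : ZMod t → Finset α), IsCycle E t v es →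
      ∃ i, (es i).card = 2

/-- The simple graph whose edges are the `2`-element members of `E`. -/
def pairGraph [DecidableEq α] (E : Finset (Finset α)) : SimpleGraph α where
  Adj x y := x ≠ y ∧ ({x, y} : Finset α) ∈ E
  symm := by
    constructor
    intro x y h
    exact ⟨Ne.symm h.1, by rw [Finset.pair_comm]; exact h.2⟩
  loopless := by constructor; intro x h; exact h.1 rfl

/-- Membership in the family `L0'`: `E` is in `L0` and the graph on the vertex set
with edge set `E₂ = {e ∈ E : |e| = 2}` is connected. -/
def MemL0' [DecidableEq α] (E : Finset (Finset α)) : Prop :=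
  MemL0 E ∧ (pairGraph (E.filter fun e => e.card = 2)).Connected

/-- A hypergraph is Sperner if no edge is contained in another distinct edge. -/
def IsSperner (E : Finset (Finset α)) : Prop :=
  ∀ e₁ ∈ E, ∀ e₂ ∈ E, e₁ ⊆ e₂ → e₁ = e₂

/-- The edge set of the Sperner subhypergraph: the edges of `E` that are minimal
with respect to inclusion. -/
def minimalEdges [DecidableEq α] (E : Finset (Finset α)) : Finset (Finset α) :=
  E.filter fun e => ∀ e' ∈ E, e' ⊆ e → e' = e

/-- The map identifying all vertices of `e` into the single new vertex `none`;
vertices outside `e` are kept (as `some`-values). -/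
def contractMap [DecidableEq α] (e : Finset α) : α → Option {v : α // v ∉ e} :=
  fun v => if h : v ∈ e then none else some ⟨v, h⟩

/-- The edge set of the contraction `H/e`: remove `e` and identify all of its
vertices into the single new vertex `none`. -/
def contractEdges [DecidableEq α] (E : Finset (Finset α)) (e : Finset α) :
    Finset (Finset (Option {v : α // v ∉ e})) :=
  (E.erase e).image fun e' => e'.image (contractMap e)

section Helpers

variable {α : Type}

lemma contractMap_eq_none [DecidableEq α] {e : Finset α} {v : α} (h : v ∈ e) :
    contractMap e v = none := dif_pos h

lemma contractMap_eq_some [DecidableEq α] {e : Finset α} {v : α} (h : v ∉ e) :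
    contractMap e v = some ⟨v, h⟩ := dif_neg h

lemma contractMap_mem_of_eq_none [DecidableEq α] {e : Finset α} {v : α}
    (h : contractMap e v = none) : v ∈ e := by
  by_contra hv
  rw [contractMap_eq_some hv] at h
  exact Option.some_ne_none _ h

lemma contractMap_right_cancel [DecidableEq α] {e : Finset α} {u u' : α} (h' : u' ∉ e)
    (h : contractMap e u = contractMap e u') : u = u' := by
  rw [contractMap_eq_some h'] at h
  by_cases hu : u ∈ e
  · rw [contractMap_eq_none hu] at h; exact nomatch h
  · rw [contractMap_eq_some hu] at h
    exact congrArg Subtype.val (Option.some_injective _ h)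

lemma countColorings_empty [Fintype α] [DecidableEq α] (k : ℕ) :
    countColorings (∅ : Finset (Finset α)) k = k ^ Fintype.card α := by
  unfold countColorings
  rw [Finset.filter_true_of_mem (fun φ _ => by intro f hf; simp at hf)]
  simp [Fintype.card_fun]

lemma memL1_of_subset {E E' : Finset (Finset α)} (h : E' ⊆ E) (hE : MemL1 E) : MemL1 E' := by
  refine ⟨fun e he => hE.1 e (h he), fun t v es hc => ?_⟩
  exact hE.2 t v es ⟨hc.1, hc.2.1, hc.2.2.1, fun i => h (hc.2.2.2.1 i), hc.2.2.2.2⟩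

lemma countColorings_erase_superset [Fintype α] [DecidableEq α] {E : Finset (Finset α)}
    {e₁ e₂ : Finset α} (h₁ : e₁ ∈ E) (h₂ : e₂ ∈ E) (hsub : e₁ ⊆ e₂) (hne : e₁ ≠ e₂) (k : ℕ) :
    countColorings E k = countColorings (E.erase e₂) k := by
  unfold countColorings
  congr 1
  apply Finset.filter_congr
  intro φ _
  show _ ↔ _
  constructor
  · intro hP f hf
    exact hP f (Finset.mem_of_mem_erase hf)
  · intro hP f hf
    by_cases hfe : f = e₂
    · obtain ⟨u, hu, v, hv, huv⟩ := hP e₁ (Finset.mem_erase.mpr ⟨hne, h₁⟩)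
      exact ⟨u, hfe ▸ hsub hu, v, hfe ▸ hsub hv, huv⟩
    · exact hP f (Finset.mem_erase.mpr ⟨hfe, hf⟩)

lemma sum_card_image_le {β γ : Type*} [DecidableEq γ] (s : Finset β) (g : β → γ) (f : γ → ℕ) :
    ∑ c ∈ s.image g, f c ≤ ∑ b ∈ s, f (g b) := by
  classical
  induction s using Finset.induction_on with
  | empty => simp
  | @insert a s ha ih =>
    rw [Finset.image_insert, Finset.sum_insert ha]
    by_cases hg : g a ∈ s.image g
    · rw [Finset.insert_eq_self.mpr hg]
      exact le_trans ih (Nat.le_add_left _ _)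
    · rw [Finset.sum_insert hg]
      exact Nat.add_le_add_left ih _

end Helpers
section DelContr

variable {α : Type} [Fintype α] [DecidableEq α]

lemma count_del_contr {E : Finset (Finset α)} {e : Finset α} (he : e ∈ E) (hene : e.Nonempty)
    (k : ℕ) :
    countColorings (E.erase e) k = countColorings E k + countColorings (contractEdges E e) k := by
  classical
  obtain ⟨v0, hv0⟩ := hene
  unfold countColorings
  set A := Finset.univ.filter fun φ : α → Fin k => IsWeakProper (E.erase e) φ with hA
  have hsplit := Finset.card_filter_add_card_filter_not
    (s := A) (p := fun φ : α → Fin k => ∃ u ∈ e, ∃ v ∈ e, φ u ≠ φ v)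
  rw [← hsplit]
  congr 1
  · -- proper on E ↔ proper on erase ∧ non-mono on e
    congr 1
    ext φ
    simp only [hA, Finset.mem_filter, Finset.mem_univ, true_and]
    constructor
    · intro ⟨hP, hQ⟩ f hf
      by_cases hfe : f = e
      · subst hfe; exact hQ
      · exact hP f (Finset.mem_erase.mpr ⟨hfe, hf⟩)
    · intro hP
      exact ⟨fun f hf => hP f (Finset.mem_of_mem_erase hf), hP e he⟩
  · -- mono on e ↔ coloring of contraction
    symm
    apply Finset.card_bij
      (i := fun (ψ : Option {v : α // v ∉ e} → Fin k) _ => ψ ∘ contractMap e)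
    · -- maps into target
      intro ψ hψ
      simp only [hA, Finset.mem_filter, Finset.mem_univ, true_and] at hψ ⊢
      constructor
      · intro f hf
        obtain ⟨u, hu, v, hv, huv⟩ := hψ (f.image (contractMap e))
          (Finset.mem_image_of_mem _ hf)
        obtain ⟨u', hu', rfl⟩ := Finset.mem_image.mp hu
        obtain ⟨v', hv', rfl⟩ := Finset.mem_image.mp hv
        exact ⟨u', hu', v', hv', huv⟩
      · rintro ⟨u, hu, v, hv, huv⟩
        exact huv (by simp [Function.comp, contractMap_eq_none hu, contractMap_eq_none hv])
    · -- injective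
      intro ψ₁ h₁ ψ₂ h₂ h
      funext o
      match o with
      | none =>
        have := congrFun h v0
        simpa [Function.comp, contractMap_eq_none hv0] using this
      | some ⟨v, hv⟩ =>
        have := congrFun h v
        simpa [Function.comp, contractMap_eq_some hv] using this
    · -- surjective
      intro φ hφ
      simp only [hA, Finset.mem_filter, Finset.mem_univ, true_and] at hφ
      obtain ⟨hP, hQ⟩ := hφ
      push_neg at hQ
      refine ⟨fun o => o.elim (φ v0) (fun s => φ s.1), Finset.mem_filter.mpr ⟨Finset.mem_univ _, ?_⟩, ?_⟩
      · -- ψ is proper for contraction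
        intro f hf
        obtain ⟨e', he', rfl⟩ := Finset.mem_image.mp hf
        obtain ⟨u, hu, v, hv, huv⟩ := hP e' he'
        refine ⟨contractMap e u, Finset.mem_image_of_mem _ hu,
          contractMap e v, Finset.mem_image_of_mem _ hv, ?_⟩
        have key : ∀ w : α, (contractMap e w).elim (φ v0) (fun s => φ s.1) = φ w := by
          intro w
          by_cases hw : w ∈ e
          · rw [contractMap_eq_none hw]; exact hQ v0 hv0 w hw
          · simp [contractMap_eq_some hw]
        simp only [key]; exact huv
      · funext w
        by_cases hw : w ∈ e
        · simp only [Function.comp_apply, contractMap_eq_none hw, Option.elim]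
          exact hQ v0 hv0 w hw
        · simp [Function.comp_apply, contractMap_eq_some hw]

end DelContr
section Inter

variable {α : Type} [DecidableEq α]

lemma inter_card_le_one {E : Finset (Finset α)} {e : Finset α}
    (hSp : IsSperner E) (hE : MemL1 E) (he : e ∈ E)
    (hbig : 4 ≤ e.card ∨ ∀ e' ∈ E, e'.card = 2) :
    ∀ e' ∈ E.erase e, (e' ∩ e).card ≤ 1 := by
  intro e' he'
  obtain ⟨hne, he'E⟩ := Finset.mem_erase.mp he'
  by_contra hcard
  push_neg at hcard
  obtain ⟨x, hx, y, hy, hxy⟩ := Finset.one_lt_card.mp hcard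
  have hxe : x ∈ e := (Finset.mem_inter.mp hx).2
  have hxe' : x ∈ e' := (Finset.mem_inter.mp hx).1
  have hye : y ∈ e := (Finset.mem_inter.mp hy).2
  have hye' : y ∈ e' := (Finset.mem_inter.mp hy).1
  have hpair : ({x, y} : Finset α).card = 2 := by
    rw [Finset.card_insert_of_notMem (by simp [hxy]), Finset.card_singleton]
  have hsub : ({x, y} : Finset α) ⊆ e := by
    intro z hz; rcases Finset.mem_insert.mp hz with rfl | hz
    · exact hxe
    · rw [Finset.mem_singleton.mp hz]; exact hye
  have hsub' : ({x, y} : Finset α) ⊆ e' := by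
    intro z hz; rcases Finset.mem_insert.mp hz with rfl | hz
    · exact hxe'
    · rw [Finset.mem_singleton.mp hz]; exact hye'
  -- if e' has card 2 then e' ⊆ e, contradicting Sperner
  have hcontra2 : e'.card = 2 → False := by
    intro h2
    have : e' = {x, y} := (Finset.eq_of_subset_of_card_le hsub' (by omega)).symm
    exact hne (hSp e' he'E e he (this ▸ hsub))
  rcases hbig with hbig | hall
  · -- build a 2-cycle (x, e, y, e', x)
    have hzm : ∀ i : ZMod 2, i = 0 ∨ i = 1 := by decide
    have hcyc : IsCycle E 2 (fun i => if i = 0 then x else y) (fun i => if i = 0 then e else e') := by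
      refine ⟨le_refl 2, ?_, ?_, ?_, ?_⟩
      · intro i j hij
        rcases hzm i with rfl | rfl <;> rcases hzm j with rfl | rfl <;>
          simp_all <;> exact absurd hij.symm hxy
      · intro i j hij
        rcases hzm i with rfl | rfl <;> rcases hzm j with rfl | rfl <;>
          simp_all
      · intro i; rcases hzm i with rfl | rfl <;> simp [he, he'E]
      · intro i
        rcases hzm i with rfl | rfl
        · simpa using ⟨hxe, hye⟩
        · constructor
          · simpa using hye'
          · have : (1 + 1 : ZMod 2) = 0 := by decide
            rw [this]; simpa using hxe'
    obtain ⟨i, hi⟩ := hE.2 2 _ _ hcyc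
    rcases hzm i with rfl | rfl
    · simp at hi; omega
    · simp at hi; exact hcontra2 hi
  · exact hcontra2 (hall e' he'E)

lemma card_image_contract {e e' : Finset α} (hle : (e' ∩ e).card ≤ 1) :
    (e'.image (contractMap e)).card = e'.card := by
  apply Finset.card_image_of_injOn
  intro u hu v hv huv
  by_cases hue : u ∈ e
  · by_cases hve : v ∈ e
    · exact Finset.card_le_one.mp hle u (Finset.mem_inter.mpr ⟨hu, hue⟩)
        v (Finset.mem_inter.mpr ⟨hv, hve⟩)
    · rw [contractMap_eq_none hue, contractMap_eq_some hve] at huv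
      exact nomatch huv
  · exact (contractMap_right_cancel hue huv.symm).symm

end Inter
section CycleLift

variable {α : Type} [DecidableEq α]

lemma contract_cycle {E : Finset (Finset α)} {e : Finset α}
    (hE : MemL1 E) (he : e ∈ E) (hbig : 4 ≤ e.card)
    (hinter : ∀ e' ∈ E.erase e, (e' ∩ e).card ≤ 1)
    {t : ℕ} (v : ZMod t → Option {x : α // x ∉ e}) (es : ZMod t → Finset (Option {x : α // x ∉ e}))
    (hc : IsCycle (contractEdges E e) t v es) :
    ∃ i, (es i).card = 2 := by
  obtain ⟨ht2, hvinj, hesinj, hesmem, hadj⟩ := hc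
  haveI : NeZero t := ⟨by omega⟩
  have hex : ∀ i, ∃ E', E' ∈ E.erase e ∧ E'.image (contractMap e) = es i := by
    intro i
    obtain ⟨E', h1, h2⟩ := Finset.mem_image.mp (hesmem i)
    exact ⟨E', h1, h2⟩
  choose Ei hEimem hEimg using hex
  have hEiE : ∀ i, Ei i ∈ E := fun i => Finset.mem_of_mem_erase (hEimem i)
  have hEine : ∀ i, Ei i ≠ e := fun i => (Finset.mem_erase.mp (hEimem i)).1
  have hEiinj : Function.Injective Ei := fun i j h =>
    hesinj (by rw [← hEimg, ← hEimg, h])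
  have hcard : ∀ i, (es i).card = (Ei i).card := fun i => by
    rw [← hEimg]; exact card_image_contract (hinter _ (hEimem i))
  suffices h : ∃ i, (Ei i).card = 2 by
    obtain ⟨i, hi⟩ := h; exact ⟨i, by rw [hcard]; exact hi⟩
  have hvx : ∀ i, ∃ u, u ∈ Ei i ∧ contractMap e u = v i := by
    intro i
    have h1 := (hadj i).1
    rw [← hEimg i] at h1
    obtain ⟨u, hu, h2⟩ := Finset.mem_image.mp h1
    exact ⟨u, hu, h2⟩
  choose w hwmem hwmap using hvx
  have hwinj : Function.Injective w := fun i j h =>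
    hvinj (by rw [← hwmap, ← hwmap, h])
  have hvx2 : ∀ i, ∃ u, u ∈ Ei i ∧ contractMap e u = v (i + 1) := by
    intro i
    have h1 := (hadj i).2
    rw [← hEimg i] at h1
    obtain ⟨u, hu, h2⟩ := Finset.mem_image.mp h1
    exact ⟨u, hu, h2⟩
  have hwne : ∀ i, v i ≠ none → w i ∉ e := by
    intro i h hmem
    exact h (by rw [← hwmap]; exact contractMap_eq_none hmem)
  have hwadj : ∀ i, v (i + 1) ≠ none → w (i + 1) ∈ Ei i := by
    intro i hni
    obtain ⟨u, hu, hcu⟩ := hvx2 i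
    have hw1 : w (i + 1) ∉ e := hwne _ hni
    have : u = w (i + 1) := contractMap_right_cancel hw1 (hcu.trans (hwmap (i + 1)).symm)
    rwa [this] at hu
  by_cases hnone : ∀ i, v i ≠ none
  · exact hE.2 t w Ei ⟨ht2, hwinj, hEiinj, hEiE, fun i => ⟨hwmem i, hwadj i (hnone _)⟩⟩
  · push_neg at hnone
    obtain ⟨i0, hi0⟩ := hnone
    have honly : ∀ i, i ≠ i0 → v i ≠ none := fun i hne hv =>
      hne (hvinj (hv.trans hi0.symm))
    have hxe : w i0 ∈ e := by
      by_contra h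
      have := hwmap i0
      rw [contractMap_eq_some h, hi0] at this
      exact nomatch this
    obtain ⟨y, hymem, hymap⟩ := hvx2 (i0 - 1)
    rw [sub_add_cancel, hi0] at hymap
    have hye : y ∈ e := contractMap_mem_of_eq_none hymap
    by_cases hxy : w i0 = y
    · refine hE.2 t w Ei ⟨ht2, hwinj, hEiinj, hEiE, fun i => ⟨hwmem i, ?_⟩⟩
      by_cases hip : i + 1 = i0
      · have hi' : i = i0 - 1 := by rw [← hip]; ring
        rw [hip, hxy, hi']
        exact hymem
      · exact hwadj i (honly _ hip)
    · -- build a cycle of length t + 1 in E through e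
      haveI : NeZero (t + 1) := ⟨by omega⟩
      set v' : ZMod (t + 1) → α :=
        fun j => if j.val < t then w (i0 + (j.val : ZMod t)) else y with hv'
      set es' : ZMod (t + 1) → Finset α :=
        fun j => if j.val < t then Ei (i0 + (j.val : ZMod t)) else e with hes'
      have hvallt : ∀ j : ZMod (t + 1), j.val < t + 1 := fun j => ZMod.val_lt j
      have hvaleq : ∀ j : ZMod (t + 1), ¬ j.val < t → j.val = t := by
        intro j h; have := hvallt j; omega
      -- w (i0 + c) for c ≠ 0 is not in e
      have hwnot : ∀ c : ZMod t, c ≠ 0 → w (i0 + c) ∉ e := by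
        intro c hc
        exact hwne _ (honly _ (fun h => hc (by rwa [add_eq_left] at h)))
      have hcastne : ∀ a : ℕ, 0 < a → a < t → ((a : ZMod t) ≠ 0) := by
        intro a ha hat h
        have := ZMod.val_cast_of_lt hat
        rw [h, ZMod.val_zero] at this
        omega
      have hcycle : IsCycle E (t + 1) v' es' := by
        refine ⟨by omega, ?_, ?_, ?_, ?_⟩
        · -- v' injective
          intro j j' hjj
          apply ZMod.val_injective
          by_cases h1 : j.val < t <;> by_cases h2 : j'.val < t
          · simp only [hv', if_pos h1, if_pos h2] at hjj
            have := add_left_cancel (hwinj hjj)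
            have h3 := ZMod.val_cast_of_lt h1
            have h4 := ZMod.val_cast_of_lt h2
            rw [← h3, ← h4, this]
          · exfalso
            simp only [hv', if_pos h1, if_neg h2] at hjj
            by_cases hz : ((j.val : ZMod t)) = 0
            · rw [hz, add_zero] at hjj; exact hxy (hjj)
            · exact hwnot _ hz (hjj ▸ hye)
          · exfalso
            simp only [hv', if_neg h1, if_pos h2] at hjj
            by_cases hz : ((j'.val : ZMod t)) = 0
            · rw [hz, add_zero] at hjj; exact hxy (hjj.symm)
            · exact hwnot _ hz (hjj ▸ hye)
          · rw [hvaleq j h1, hvaleq j' h2]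
        · -- es' injective
          intro j j' hjj
          apply ZMod.val_injective
          by_cases h1 : j.val < t <;> by_cases h2 : j'.val < t
          · simp only [hes', if_pos h1, if_pos h2] at hjj
            have := add_left_cancel (hEiinj hjj)
            have h3 := ZMod.val_cast_of_lt h1
            have h4 := ZMod.val_cast_of_lt h2
            rw [← h3, ← h4, this]
          · exfalso
            simp only [hes', if_pos h1, if_neg h2] at hjj
            exact hEine _ hjj
          · exfalso
            simp only [hes', if_neg h1, if_pos h2] at hjj
            exact hEine _ hjj.symm
          · rw [hvaleq j h1, hvaleq j' h2]
        · intro j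
          by_cases h1 : j.val < t
          · simp only [hes', if_pos h1]; exact hEiE _
          · simp only [hes', if_neg h1]; exact he
        · intro j
          constructor
          · by_cases h1 : j.val < t
            · simp only [hv', hes', if_pos h1]; exact hwmem _
            · simp only [hv', hes', if_neg h1]; exact hye
          · -- v' (j + 1) ∈ es' j
            haveI : Fact (1 < t + 1) := ⟨by omega⟩
            have hval1 : (1 : ZMod (t + 1)).val = 1 := ZMod.val_one _
            have haddval : (j + 1).val = (j.val + 1) % (t + 1) := by
              rw [ZMod.val_add, hval1]
            by_cases h1 : j.val < t
            · have hj1 : (j + 1).val = j.val + 1 := by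
                rw [haddval, Nat.mod_eq_of_lt (by omega)]
              by_cases h2 : j.val + 1 < t
              · have : v' (j + 1) = w (i0 + (j.val : ZMod t) + 1) := by
                  simp only [hv', hj1, if_pos h2]
                  congr 1
                  push_cast
                  ring
                rw [this]
                simp only [hes', if_pos h1]
                apply hwadj
                apply honly
                intro h
                rw [add_assoc, add_eq_left] at h
                have : ((j.val + 1 : ℕ) : ZMod t) = 0 := by push_cast; exact h
                exact hcastne _ (by omega) h2 this
              · -- j.val + 1 = t
                have hjt : j.val + 1 = t := by omega
                have : v' (j + 1) = y := by
                  simp only [hv', hj1, if_neg h2]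
                rw [this]
                simp only [hes', if_pos h1]
                have hcast : (j.val : ZMod t) = -1 := by
                  have : ((j.val + 1 : ℕ) : ZMod t) = 0 := by rw [hjt, ZMod.natCast_self]
                  push_cast at this
                  linear_combination this
                rw [hcast]
                have : i0 + -1 = i0 - 1 := by ring
                rw [this]
                exact hymem
            · -- j.val = t : wrap around
              have hjt : j.val = t := hvaleq j h1
              have hj1 : (j + 1).val = 0 := by
                rw [haddval, hjt, Nat.mod_self]
              have : v' (j + 1) = w i0 := by
                simp only [hv', hj1, if_pos (by omega : (0:ℕ) < t)]
                norm_num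
              rw [this]
              simp only [hes', if_neg h1]
              exact hxe
      obtain ⟨j, hj⟩ := hE.2 (t + 1) v' es' hcycle
      by_cases h1 : j.val < t
      · simp only [hes', if_pos h1] at hj
        exact ⟨_, hj⟩
      · simp only [hes', if_neg h1] at hj
        omega

end CycleLift
section Main

lemma exists_poly_empty (α : Type) [Fintype α] [DecidableEq α] :
    ∃ p : Polynomial ℝ,
      (∀ k : ℕ, 0 < k → p.eval (k : ℝ) = countColorings (∅ : Finset (Finset α)) k) ∧
      ∀ lam : ℝ, lam < 0 → 0 < (-1 : ℝ) ^ (Fintype.card α) * p.eval lam := by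
  refine ⟨Polynomial.X ^ Fintype.card α, ?_, ?_⟩
  · intro k hk
    rw [countColorings_empty]
    simp only [Polynomial.eval_pow, Polynomial.eval_X]
    push_cast
    ring
  · intro lam hlam
    simp only [Polynomial.eval_pow, Polynomial.eval_X]
    have h1 : (-1 : ℝ) ^ (Fintype.card α) * lam ^ (Fintype.card α) = (-lam) ^ (Fintype.card α) := by
      rw [← neg_one_mul lam, mul_pow]
    rw [h1]
    exact pow_pos (by linarith) _

lemma exists_chromatic :
    ∀ (n : ℕ) (α : Type) [Fintype α] [DecidableEq α] (E : Finset (Finset α)),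
      (∑ f ∈ E, f.card) ≤ n → (∀ f ∈ E, f.Nonempty) → MemL1 E →
      ∃ p : Polynomial ℝ, (∀ k : ℕ, 0 < k → p.eval (k : ℝ) = countColorings E k) ∧
        ∀ lam : ℝ, lam < 0 → 0 < (-1 : ℝ) ^ (Fintype.card α) * p.eval lam := by
  intro n
  induction n with
  | zero =>
    intro α _ _ E hsum hne hE
    have hempty : E = ∅ := by
      rcases Finset.eq_empty_or_nonempty E with h | ⟨f, hf⟩
      · exact h
      · exfalso
        have h1 : 1 ≤ f.card := Finset.card_pos.mpr (hne f hf)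
        have h2 : f.card ≤ ∑ g ∈ E, g.card :=
          Finset.single_le_sum (fun g _ => Nat.zero_le _) hf
        omega
    subst hempty
    exact exists_poly_empty α
  | succ n ih =>
    intro α _ _ E hsum hne hE
    rcases Finset.eq_empty_or_nonempty E with rfl | hEne
    · exact exists_poly_empty α
    by_cases hSp : IsSperner E
    · -- Sperner case: delete/contract a suitable edge
      have hch : ∃ e ∈ E, 4 ≤ e.card ∨ ∀ e' ∈ E, e'.card = 2 := by
        by_cases hb : ∃ e ∈ E, 4 ≤ e.card
        · obtain ⟨e, he, h4⟩ := hb; exact ⟨e, he, Or.inl h4⟩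
        · push_neg at hb
          obtain ⟨e, he⟩ := hEne
          refine ⟨e, he, Or.inr fun e' he' => ?_⟩
          have h1 := Finset.card_pos.mpr (hne e' he')
          have h3 := hb e' he'
          obtain ⟨m, hm⟩ := hE.1 e' he'
          omega
      obtain ⟨e, he, hbig⟩ := hch
      have hene := hne e he
      have hinter := inter_card_le_one hSp hE he hbig
      have hecard : 1 ≤ e.card := Finset.card_pos.mpr hene
      obtain ⟨m, hm⟩ := hE.1 e he
      have hecard2 : 2 ≤ e.card := by omega
      have hsum_erase : ∑ f ∈ E.erase e, f.card + e.card = ∑ f ∈ E, f.card :=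
        Finset.sum_erase_add E _ he
      obtain ⟨p₁, hp₁, hpos₁⟩ := ih α (E.erase e)
        (by omega) (fun f hf => hne f (Finset.mem_of_mem_erase hf))
        (memL1_of_subset (Finset.erase_subset _ _) hE)
      have hconne : ∀ f ∈ contractEdges E e, f.Nonempty := by
        intro f hf
        obtain ⟨e', he', rfl⟩ := Finset.mem_image.mp hf
        exact (hne e' (Finset.mem_of_mem_erase he')).image _
      have hconL1 : MemL1 (contractEdges E e) := by
        constructor
        · intro f hf
          obtain ⟨e', he', rfl⟩ := Finset.mem_image.mp hf
          rw [card_image_contract (hinter _ he')]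
          exact hE.1 e' (Finset.mem_of_mem_erase he')
        · intro t v es hc
          rcases hbig with h4 | hall
          · exact contract_cycle hE he h4 hinter v es hc
          · haveI : NeZero t := ⟨by have := hc.1; omega⟩
            obtain ⟨e', he', himg⟩ := Finset.mem_image.mp (hc.2.2.2.1 0)
            refine ⟨0, ?_⟩
            rw [← himg, card_image_contract (hinter _ he')]
            exact hall e' (Finset.mem_of_mem_erase he')
      have hconsum : ∑ f ∈ contractEdges E e, f.card ≤ n := by
        have h1 : ∑ f ∈ contractEdges E e, f.card ≤
            ∑ e' ∈ E.erase e, (e'.image (contractMap e)).card :=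
          sum_card_image_le _ _ _
        have h2 : ∑ e' ∈ E.erase e, (e'.image (contractMap e)).card = ∑ e' ∈ E.erase e, e'.card :=
          Finset.sum_congr rfl (fun e' he' => card_image_contract (hinter _ he'))
        omega
      obtain ⟨p₂, hp₂, hpos₂⟩ :=
        ih (Option {v : α // v ∉ e}) (contractEdges E e) hconsum hconne hconL1
      refine ⟨p₁ - p₂, ?_, ?_⟩
      · intro k hk
        have hcount := count_del_contr he hene k
        rw [Polynomial.eval_sub, hp₁ k hk, hp₂ k hk]
        have hcast : (countColorings (E.erase e) k : ℝ) =
            (countColorings E k : ℝ) + (countColorings (contractEdges E e) k : ℝ) := by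
          rw [hcount]; push_cast; ring
        linarith
      · intro lam hlam
        have h1 := hpos₁ lam hlam
        have h2 := hpos₂ lam hlam
        have hle : e.card ≤ Fintype.card α := by
          simpa using Finset.card_le_univ e
        have hcardopt : Fintype.card (Option {v : α // v ∉ e}) = (Fintype.card α - e.card) + 1 := by
          rw [Fintype.card_option]
          congr 1
          rw [Fintype.card_subtype_compl, Fintype.card_coe]
        have hodd : Odd (Fintype.card α + Fintype.card (Option {v : α // v ∉ e})) := by
          rw [hcardopt, Nat.odd_iff]
          omega
        have hprod : (-1 : ℝ) ^ (Fintype.card α) *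
            (-1 : ℝ) ^ (Fintype.card (Option {v : α // v ∉ e})) = -1 := by
          rw [← pow_add]; exact Odd.neg_one_pow hodd
        have hsq : (-1 : ℝ) ^ (Fintype.card (Option {v : α // v ∉ e})) *
            (-1 : ℝ) ^ (Fintype.card (Option {v : α // v ∉ e})) = 1 := by
          rw [← pow_add]; exact Even.neg_one_pow ⟨_, rfl⟩
        have hsign : (-1 : ℝ) ^ (Fintype.card α) =
            - (-1 : ℝ) ^ (Fintype.card (Option {v : α // v ∉ e})) := by
          have h3 : (-1 : ℝ) ^ (Fintype.card α) = (-1 : ℝ) ^ (Fintype.card α) *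
              ((-1 : ℝ) ^ (Fintype.card (Option {v : α // v ∉ e})) *
               (-1 : ℝ) ^ (Fintype.card (Option {v : α // v ∉ e}))) := by
            rw [hsq, mul_one]
          rw [h3, ← mul_assoc, hprod, neg_one_mul]
        rw [Polynomial.eval_sub]
        have hkey : (-1 : ℝ) ^ (Fintype.card α) * (p₁.eval lam - p₂.eval lam) =
            (-1 : ℝ) ^ (Fintype.card α) * p₁.eval lam +
            (-1 : ℝ) ^ (Fintype.card (Option {v : α // v ∉ e})) * p₂.eval lam := by
          rw [hsign]; ring
        rw [hkey]
        linarith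
    · -- non-Sperner: remove a redundant superset edge
      unfold IsSperner at hSp
      push_neg at hSp
      obtain ⟨e₁, he₁, e₂, he₂, hsub, hne12⟩ := hSp
      have hc2 : 1 ≤ e₂.card := Finset.card_pos.mpr (hne e₂ he₂)
      have hsum_erase : ∑ f ∈ E.erase e₂, f.card + e₂.card = ∑ f ∈ E, f.card :=
        Finset.sum_erase_add E _ he₂
      obtain ⟨p, hp, hpos⟩ := ih α (E.erase e₂) (by omega)
        (fun f hf => hne f (Finset.mem_of_mem_erase hf))
        (memL1_of_subset (Finset.erase_subset _ _) hE)
      refine ⟨p, fun k hk => ?_, hpos⟩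
      rw [hp k hk, countColorings_erase_superset he₁ he₂ hsub hne12 k]

end Main
/-- Dohmen's theorem: if `H ∈ L1`, then `(-1)^{|V|} P(H, λ) > 0` for all real `λ < 0`. -/
theorem stmt3 {α : Type} [Fintype α] [DecidableEq α] (E : Finset (Finset α))
    (hne : ∀ e ∈ E, e.Nonempty) (hE : MemL1 E)
    (p : Polynomial ℝ)
    (hp : ∀ k : ℕ, 0 < k → p.eval (k : ℝ) = countColorings E k)
    (lam : ℝ) (hlam : lam < 0) :
    0 < (-1 : ℝ) ^ (Fintype.card α) * p.eval lam := by
  obtain ⟨q, hq, hqpos⟩ := exists_chromatic (∑ f ∈ E, f.card) α E le_rfl hne hE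
  have hpq : p = q := by
    apply Polynomial.eq_of_infinite_eval_eq
    apply Set.infinite_of_injective_forall_mem (f := fun k : ℕ => ((k + 1 : ℕ) : ℝ))
    · intro a b hab
      have : (a + 1 : ℕ) = (b + 1 : ℕ) := Nat.cast_inj.mp hab
      omega
    · intro k
      show p.eval _ = q.eval _
      rw [hp (k + 1) (Nat.succ_pos k), hq (k + 1) (Nat.succ_pos k)]
  rw [hpq]
  exact hqpos lam hlam
end

section
/- Let H = (V, E) be a hypergraph in the family L0', and let p be a real polynomial such that for every positive integer k, p(k) equals the number of weak proper k-colorings of H. Then there exists a real polynomial q with p = X · q, and for every real number λ with 0 ≤ λ < 1, one has (-1)^{|V|+1} · q(λ) > 0. -/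
open Finset Polynomial

variable {α : Type}

set_option linter.unusedSectionVars false



section Graph

/-- Number of proper colorings of a graph. -/
noncomputable def properCount (β : Type) (G : SimpleGraph β) (k : ℕ) : ℕ :=
  Nat.card {ψ : β → Fin k // ∀ ⦃x y⦄, G.Adj x y → ψ x ≠ ψ y}

lemma connected_map {β γ : Type} {G : SimpleGraph β} {H : SimpleGraph γ} (f : β → γ)
    (hf : Function.Surjective f) (hmap : ∀ x y, G.Adj x y → H.Adj (f x) (f y) ∨ f x = f y)
    (hG : G.Connected) : H.Connected := by
  have key : ∀ a b : β, G.Reachable a b → H.Reachable (f a) (f b) := by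
    intro a b hr
    obtain ⟨w⟩ := hr
    induction w with
    | nil => exact SimpleGraph.Reachable.refl _
    | cons h p ih =>
      rcases hmap _ _ h with h' | h'
      · exact (h'.reachable).trans ih
      · rw [h']; exact ih
  rw [SimpleGraph.connected_iff]
  refine ⟨fun c d => ?_, hG.nonempty.map f⟩
  obtain ⟨a, rfl⟩ := hf c
  obtain ⟨b, rfl⟩ := hf d
  exact key a b (hG.preconnected a b)

lemma connected_deleteEdge {β : Type} {G : SimpleGraph β} {u v : β}
    (hG : G.Connected) (h : (G.deleteEdges {s(u,v)}).Reachable u v) :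
    (G.deleteEdges {s(u,v)}).Connected := by
  have key : ∀ a b : β, G.Reachable a b → (G.deleteEdges {s(u,v)}).Reachable a b := by
    intro a b hr
    obtain ⟨w⟩ := hr
    induction w with
    | nil => exact SimpleGraph.Reachable.refl _
    | @cons x y z hadj p ih =>
      by_cases he : s(x, y) = s(u, v)
      · rcases Sym2.eq_iff.mp he with ⟨rfl, rfl⟩ | ⟨rfl, rfl⟩
        · exact h.trans ih
        · exact h.symm.trans ih
      · exact ((SimpleGraph.deleteEdges_adj.mpr ⟨hadj, he⟩).reachable).trans ih
  rw [SimpleGraph.connected_iff]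
  exact ⟨fun a b => key a b (hG.preconnected a b), hG.nonempty⟩

lemma natCard_split {γ : Type} [Fintype γ] (p q : γ → Prop) :
    Nat.card {x // p x ∧ q x} + Nat.card {x // p x ∧ ¬ q x} = Nat.card {x // p x} := by
  classical
  simp only [Nat.card_eq_fintype_card, Fintype.card_subtype]
  rw [← Finset.filter_filter, ← Finset.filter_filter,
    Finset.card_filter_add_card_filter_not]

end Graph

section Contract

variable {β : Type} [DecidableEq β]

def cmap (u v : β) (h : u ≠ v) (x : β) : {y : β // y ≠ v} :=
  if hx : x = v then ⟨u, h⟩ else ⟨x, hx⟩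

def contractG (G : SimpleGraph β) (u v : β) (h : u ≠ v) : SimpleGraph {y : β // y ≠ v} :=
  SimpleGraph.fromRel fun a b =>
    ∃ x y, G.Adj x y ∧ s(x,y) ≠ s(u,v) ∧ a = cmap u v h x ∧ b = cmap u v h y

variable [Fintype β] {G : SimpleGraph β} {u v : β} (h : u ≠ v)

lemma cmap_surjective : Function.Surjective (cmap u v h) := by
  rintro ⟨x, hx⟩
  exact ⟨x, by simp [cmap, hx]⟩

lemma cmap_eq_iff {x y : β} (hxy : cmap u v h x = cmap u v h y) : x = y ∨ s(x,y) = s(u,v) := by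
  by_cases hx : x = v <;> by_cases hy : y = v
  · left; rw [hx, hy]
  · simp only [cmap, dif_pos hx, dif_neg hy, Subtype.mk.injEq] at hxy
    right; rw [Sym2.eq_iff]; right; exact ⟨hx, hxy.symm⟩
  · simp only [cmap, dif_neg hx, dif_pos hy, Subtype.mk.injEq] at hxy
    right; rw [Sym2.eq_iff]; left; exact ⟨hxy, hy⟩
  · simp only [cmap, dif_neg hx, dif_neg hy, Subtype.mk.injEq] at hxy
    left; exact hxy

lemma cmap_u_eq_v : cmap u v h u = cmap u v h v := by
  simp [cmap, h]

lemma contractG_connected (hG : G.Connected) : (contractG G u v h).Connected := by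
  apply connected_map (cmap u v h) (cmap_surjective h) _ hG
  intro x y hxy
  by_cases he : s(x,y) = s(u,v)
  · right
    rcases Sym2.eq_iff.mp he with ⟨rfl, rfl⟩ | ⟨rfl, rfl⟩
    · exact cmap_u_eq_v h
    · exact (cmap_u_eq_v h).symm
  · by_cases hc : cmap u v h x = cmap u v h y
    · right; exact hc
    · left
      exact ⟨hc, Or.inl ⟨x, y, hxy, he, rfl, rfl⟩⟩

lemma psi_cmap {k : ℕ} (ψ : β → Fin k) (hm : ψ u = ψ v) (x : β) : ψ (cmap u v h x).1 = ψ x := by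
  by_cases hx : x = v
  · subst hx
    simp only [cmap, dif_pos rfl]
    exact hm
  · simp only [cmap, dif_neg hx]

/-- colorings of `G - uv` which give `u,v` the same color correspond to proper colorings
of the contraction. -/
def contractEquiv (k : ℕ) :
    {ψ : β → Fin k // (∀ ⦃x y⦄, (G.deleteEdges {s(u,v)}).Adj x y → ψ x ≠ ψ y) ∧ ψ u = ψ v} ≃
    {ψ' : {y : β // y ≠ v} → Fin k // ∀ ⦃a b⦄, (contractG G u v h).Adj a b → ψ' a ≠ ψ' b} where
  toFun ψ := ⟨fun a => ψ.1 a.1, by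
    rintro a b ⟨hab, hrel⟩ heq
    have key : ∀ x y : β, G.Adj x y → s(x,y) ≠ s(u,v) → a = cmap u v h x → b = cmap u v h y →
        False := by
      rintro x y hxy he rfl rfl
      have hne := ψ.2.1 (SimpleGraph.deleteEdges_adj.mpr ⟨hxy, he⟩)
      have e1 : ψ.1 (cmap u v h x).1 = ψ.1 x := psi_cmap h ψ.1 ψ.2.2 x
      have e2 : ψ.1 (cmap u v h y).1 = ψ.1 y := psi_cmap h ψ.1 ψ.2.2 y
      simp only at heq
      rw [e1, e2] at heq
      exact hne heq
    rcases hrel with ⟨x, y, hxy, he, ha, hb⟩ | ⟨x, y, hxy, he, hb, ha⟩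
    · exact key x y hxy he ha hb
    · exact key y x hxy.symm (by rwa [Sym2.eq_swap]) ha hb⟩
  invFun ψ' := ⟨fun x => ψ'.1 (cmap u v h x), by
    constructor
    · intro x y hxy heq
      rw [SimpleGraph.deleteEdges_adj] at hxy
      have hne : cmap u v h x ≠ cmap u v h y := by
        intro hc
        rcases cmap_eq_iff h hc with rfl | hc'
        · exact hxy.1.ne rfl
        · exact hxy.2 (by simpa using hc')
      exact ψ'.2 ⟨hne, Or.inl ⟨x, y, hxy.1, hxy.2, rfl, rfl⟩⟩ heq
    · show ψ'.1 (cmap u v h u) = ψ'.1 (cmap u v h v)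
      rw [cmap_u_eq_v h]⟩
  left_inv := by
    rintro ⟨ψ, hp, hm⟩
    apply Subtype.ext
    funext x
    exact psi_cmap h ψ hm x
  right_inv := by
    rintro ⟨ψ', hp⟩
    apply Subtype.ext
    funext a
    show ψ' (cmap u v h a.1) = ψ' a
    congr 1
    obtain ⟨x, hx⟩ := a
    simp [cmap, hx]

lemma contract_count (k : ℕ) :
    properCount {y : β // y ≠ v} (contractG G u v h) k =
      Nat.card {ψ : β → Fin k //
        (∀ ⦃x y⦄, (G.deleteEdges {s(u,v)}).Adj x y → ψ x ≠ ψ y) ∧ ψ u = ψ v} :=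
  (Nat.card_congr (contractEquiv h k)).symm

end Contract

section GraphMain

lemma reachable_induce {β : Type} {G : SimpleGraph β} {w : β} {a b : β}
    (p : G.Walk a b) (hw : w ∉ p.support) (ha : a ≠ w) (hb : b ≠ w) :
    (SimpleGraph.comap (fun x : {y : β // y ≠ w} => x.1) G).Reachable ⟨a, ha⟩ ⟨b, hb⟩ := by
  induction p with
  | nil => exact SimpleGraph.Reachable.refl _
  | @cons x y z hadj q ih =>
    rw [SimpleGraph.Walk.support_cons] at hw
    have hw' : w ∉ q.support := fun hh => hw (List.mem_cons_of_mem _ hh)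
    have hy : y ≠ w := fun hh => hw' (hh ▸ q.start_mem_support)
    have step : (SimpleGraph.comap (fun x : {y : β // y ≠ w} => x.1) G).Adj ⟨x, ha⟩ ⟨y, hy⟩ :=
      hadj
    exact step.reachable.trans (ih hw' hy hb)

lemma card_subtype_ne {β : Type} [Fintype β] [DecidableEq β] (w : β) :
    Fintype.card {y : β // y ≠ w} = Fintype.card β - 1 := by
  classical
  have h1 : Fintype.card {y : β // ¬ (y = w)} =
      Fintype.card β - Fintype.card {y : β // y = w} := Fintype.card_subtype_compl _
  rw [Fintype.card_subtype_eq] at h1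
  calc Fintype.card {y : β // y ≠ w} = Fintype.card {y : β // ¬ (y = w)} := rfl
  _ = Fintype.card β - 1 := h1

theorem graph_sign : ∀ (N : ℕ) (β : Type) [Fintype β] (G : SimpleGraph β),
    Fintype.card β + Nat.card G.edgeSet ≤ N → G.Connected →
    ∃ q : Polynomial ℝ, (∀ k : ℕ, 0 < k → (X * q).eval (k : ℝ) = (properCount β G k : ℝ)) ∧
      ∀ lam : ℝ, 0 ≤ lam → lam < 1 → 0 < (-1 : ℝ) ^ (Fintype.card β + 1) * q.eval lam := by
  intro N
  induction N with
  | zero =>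
    intro β _ G hle hc
    have : 0 < Fintype.card β := Fintype.card_pos_iff.mpr hc.nonempty
    omega
  | succ N IH =>
    intro β instβ G hle hc
    classical
    by_cases hE : G.edgeSet = ∅
    · -- no edges: single vertex
      have hbot : G = ⊥ := SimpleGraph.edgeSet_eq_empty.mp hE
      have hcard : Fintype.card β = 1 := by
        obtain ⟨x⟩ := hc.nonempty
        refine Fintype.card_eq_one_iff.mpr ⟨x, fun y => ?_⟩
        obtain ⟨wk⟩ := hc.preconnected y x
        cases wk with
        | nil => rfl
        | cons h p => rw [hbot] at h; exact absurd h (by simp)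
      refine ⟨1, fun k hk => ?_, fun lam _ _ => by simp [hcard]⟩
      have hcnt : properCount β G k = k ^ Fintype.card β := by
        unfold properCount
        rw [Nat.card_congr (Equiv.subtypeUnivEquiv (fun ψ x y hxy => by
          rw [hbot] at hxy; exact absurd hxy (by simp)))]
        rw [Nat.card_eq_fintype_card, Fintype.card_fun, Fintype.card_fin]
      rw [hcnt, hcard]
      simp
    · -- there is an edge
      obtain ⟨e0, he0⟩ := Set.nonempty_iff_ne_empty.mpr hE
      have hadj : ∃ x y : β, G.Adj x y := by
        induction e0 using Sym2.ind with
        | _ x y => exact ⟨x, y, he0⟩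
      obtain ⟨x0, y0, hx0y0⟩ := hadj
      have hn2 : 2 ≤ Fintype.card β := Fintype.one_lt_card_iff.mpr ⟨x0, y0, hx0y0.ne⟩
      by_cases hleaf : ∃ w : β, G.degree w = 1
      · -- leaf case
        obtain ⟨w, hw⟩ := hleaf
        obtain ⟨u0, hu0⟩ : ∃ a, G.neighborFinset w = {a} := Finset.card_eq_one.mp hw
        have hadju0 : G.Adj w u0 := by
          rw [← SimpleGraph.mem_neighborFinset, hu0]; exact Finset.mem_singleton_self _
        have huniq : ∀ y, G.Adj w y → y = u0 := fun y hy => by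
          have h1 : y ∈ G.neighborFinset w := (SimpleGraph.mem_neighborFinset _ _ _).mpr hy
          rw [hu0] at h1; exact Finset.mem_singleton.mp h1
        have hu0w : u0 ≠ w := fun hh => G.irrefl (hh ▸ hadju0)
        set G' : SimpleGraph {y : β // y ≠ w} :=
          SimpleGraph.comap (fun a : {y : β // y ≠ w} => a.1) G with hG'
        have hcardβ' : Fintype.card {y : β // y ≠ w} = Fintype.card β - 1 :=
          card_subtype_ne w
        -- connectivity
        have hreach : ∀ (x : β) (hx : x ≠ w), G'.Reachable ⟨x, hx⟩ ⟨u0, hu0w⟩ := by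
          intro x hx
          obtain ⟨p0⟩ := hc.preconnected x u0
          set p := p0.toPath with hp
          by_cases hmem : w ∈ p.1.support
          · have hp1 : (p.1.takeUntil w hmem).IsPath := p.2.takeUntil hmem
            have hp1r : (p.1.takeUntil w hmem).reverse.IsPath := hp1.reverse
            generalize hq : (p.1.takeUntil w hmem).reverse = rr at hp1r
            cases rr with
            | nil => exact absurd rfl hx
            | @cons _ y _ hadj q' =>
              have hy : y = u0 := huniq y hadj
              subst hy
              have hnd := hp1r.support_nodup
              rw [SimpleGraph.Walk.support_cons] at hnd
              have hwq : w ∉ q'.support := (List.nodup_cons.mp hnd).1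
              exact (reachable_induce q' hwq hu0w hx).symm
          · exact reachable_induce (p.1) hmem hx hu0w
        have hcG' : G'.Connected := by
          rw [SimpleGraph.connected_iff]
          refine ⟨fun a b => ?_, ⟨⟨u0, hu0w⟩⟩⟩
          exact (hreach a.1 a.2).trans (hreach b.1 b.2).symm
        -- measure
        have hmeas : Fintype.card {y : β // y ≠ w} + Nat.card G'.edgeSet ≤ N := by
          have hinj : Nat.card G'.edgeSet ≤ Nat.card G.edgeSet := by
            refine Nat.card_le_card_of_injective
              (fun e => ⟨Sym2.map (fun a => a.1) e.1, ?_⟩) ?_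
            · obtain ⟨e, he⟩ := e
              induction e using Sym2.ind with
              | _ a b => exact he
            · rintro ⟨e1, he1⟩ ⟨e2, he2⟩ hee
              apply Subtype.ext
              exact Sym2.map.injective Subtype.val_injective (congrArg Subtype.val hee)
          omega
        obtain ⟨q', hq'1, hq'2⟩ := IH _ G' hmeas hcG'
        refine ⟨(X - 1) * q', ?_, ?_⟩
        · intro k hk
          -- counting
          have hcount : properCount β G k = (k - 1) * properCount _ G' k := by
            unfold properCount
            rw [Nat.card_eq_fintype_card, Nat.card_eq_fintype_card,
              Fintype.card_subtype, Fintype.card_subtype]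
            set A := Finset.univ.filter
              (fun ψ : β → Fin k => ∀ ⦃x y⦄, G.Adj x y → ψ x ≠ ψ y) with hA
            set Bf := Finset.univ.filter
              (fun χ : {y : β // y ≠ w} → Fin k => ∀ ⦃x y⦄, G'.Adj x y → χ x ≠ χ y) with hB
            have hmapsto : ∀ ψ ∈ A, (fun a : {y : β // y ≠ w} => ψ a.1) ∈ Bf := by
              intro ψ hψ
              rw [hA, Finset.mem_filter] at hψ
              rw [hB, Finset.mem_filter]
              exact ⟨Finset.mem_univ _, fun x y hxy => hψ.2 hxy⟩
            rw [Finset.card_eq_sum_card_fiberwise hmapsto]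
            have hfib : ∀ χ ∈ Bf,
                (A.filter fun ψ => (fun a : {y : β // y ≠ w} => ψ a.1) = χ).card = k - 1 := by
              intro χ hχ
              rw [hB, Finset.mem_filter] at hχ
              have hcnum : (Finset.univ.filter fun c : Fin k => c ≠ χ ⟨u0, hu0w⟩).card = k - 1 := by
                rw [Finset.filter_ne', Finset.card_erase_of_mem (Finset.mem_univ _),
                  Finset.card_univ, Fintype.card_fin]
              rw [← hcnum]
              refine Finset.card_bij (fun ψ _ => ψ w) ?_ ?_ ?_
              · intro ψ hψ
                rw [Finset.mem_filter] at hψ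
                obtain ⟨hψA, hψχ⟩ := hψ
                rw [hA, Finset.mem_filter] at hψA
                rw [Finset.mem_filter]
                refine ⟨Finset.mem_univ _, ?_⟩
                have hne := hψA.2 hadju0
                have hval : χ ⟨u0, hu0w⟩ = ψ u0 := by rw [← hψχ]
                show ψ w ≠ χ ⟨u0, hu0w⟩
                rw [hval]
                exact hne
              · intro ψ1 h1 ψ2 h2 heq
                rw [Finset.mem_filter] at h1 h2
                funext z
                by_cases hz : z = w
                · rw [hz]; exact heq
                · have e1 : χ ⟨z, hz⟩ = ψ1 z := by rw [← h1.2]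
                  have e2 : χ ⟨z, hz⟩ = ψ2 z := by rw [← h2.2]
                  rw [← e1, ← e2]
              · intro c hcmem
                rw [Finset.mem_filter] at hcmem
                refine ⟨fun z => if hz : z = w then c else χ ⟨z, hz⟩, ?_, by simp⟩
                rw [Finset.mem_filter]
                constructor
                · rw [hA, Finset.mem_filter]
                  refine ⟨Finset.mem_univ _, ?_⟩
                  intro x y hxy
                  show (if hz : x = w then c else χ ⟨x, hz⟩) ≠
                    (if hz : y = w then c else χ ⟨y, hz⟩)
                  by_cases hxw : x = w
                  · have hyu : y = u0 := huniq y (hxw ▸ hxy)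
                    have hyw : y ≠ w := by
                      intro hh
                      rw [hxw, hh] at hxy
                      exact G.irrefl hxy
                    rw [dif_pos hxw, dif_neg hyw]
                    subst hyu
                    exact hcmem.2
                  · by_cases hyw : y = w
                    · have hxu : x = u0 := huniq x (hyw ▸ hxy.symm)
                      rw [dif_pos hyw, dif_neg hxw]
                      subst hxu
                      exact fun hh => hcmem.2 hh.symm
                    · rw [dif_neg hxw, dif_neg hyw]
                      exact hχ.2 (by exact hxy)
                · funext a
                  show (if hz : a.1 = w then c else χ ⟨a.1, hz⟩) = χ a
                  rw [dif_neg a.2]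
            rw [Finset.sum_congr rfl hfib, Finset.sum_const, smul_eq_mul, mul_comm]
          have hpc := hq'1 k hk
          rw [eval_mul, eval_X] at hpc
          rw [eval_mul, eval_mul, eval_sub, eval_X, eval_one, hcount]
          push_cast [Nat.cast_sub (Nat.one_le_iff_ne_zero.mpr hk.ne')]
          linear_combination ((k : ℝ) - 1) * hpc
        · intro lam h0 h1
          have h2 := hq'2 lam h0 h1
          rw [hcardβ'] at h2
          obtain ⟨m, hm⟩ : ∃ m, Fintype.card β = m + 2 := ⟨Fintype.card β - 2, by omega⟩
          rw [hm] at h2 ⊢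
          have hred : m + 2 - 1 + 1 = m + 2 := by omega
          rw [hred] at h2
          rw [eval_mul, eval_sub, eval_X, eval_one]
          have e1 : (-1 : ℝ)^(m+2+1) = -(-1:ℝ)^(m+2) := by rw [pow_succ]; ring
          rw [e1]
          have h4 : 0 < 1 - lam := by linarith
          nlinarith [h2, h4]
      · -- no leaf: delete-contract on a non-bridge edge
        push_neg at hleaf
        have hdeg : ∀ x : β, 2 ≤ G.degree x := by
          intro x
          have h1 : 0 < G.degree x := by
            rw [SimpleGraph.degree_pos_iff_exists_adj]
            obtain ⟨y, hy⟩ := Fintype.exists_ne_of_one_lt_card hn2 x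
            obtain ⟨wk⟩ := hc.preconnected x y
            cases wk with
            | nil => exact absurd rfl hy
            | cons h p => exact ⟨_, h⟩
          have h2' := hleaf x
          omega
        have hedgeNat : Nat.card G.edgeSet = G.edgeFinset.card := by
          rw [Nat.card_eq_fintype_card, SimpleGraph.edgeFinset_card]
        have hedgecard : Fintype.card β ≤ G.edgeFinset.card := by
          have h2 := SimpleGraph.sum_degrees_eq_twice_card_edges G
          have h3 : ∑ _v : β, 2 ≤ ∑ v : β, G.degree v :=
            Finset.sum_le_sum fun i _ => hdeg i
          rw [Finset.sum_const, Finset.card_univ, smul_eq_mul] at h3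
          omega
        have hnotac : ¬ G.IsAcyclic := by
          intro hac
          have htree : G.IsTree := ⟨hc, hac⟩
          have h4 := htree.card_edgeFinset
          omega
        rw [SimpleGraph.isAcyclic_iff_forall_adj_isBridge] at hnotac
        push_neg at hnotac
        obtain ⟨u, v, huv, hnb⟩ := hnotac
        rw [SimpleGraph.isBridge_iff] at hnb
        push_neg at hnb
        have hreachuv : (G.deleteEdges {s(u,v)}).Reachable u v := hnb
        set Gd := G.deleteEdges {s(u,v)} with hGd
        have hGdconn : Gd.Connected := connected_deleteEdge hc hreachuv
        have huvne : u ≠ v := huv.ne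
        have hGcconn : (contractG G u v huvne).Connected := contractG_connected huvne hc
        have hecard : 1 ≤ Nat.card G.edgeSet := by
          rw [Nat.card_eq_fintype_card]
          exact Fintype.card_pos_iff.mpr ⟨⟨s(u,v), huv⟩⟩
        have hGdcard : Nat.card Gd.edgeSet + 1 ≤ Nat.card G.edgeSet := by
          rw [Nat.card_coe_set_eq, Nat.card_coe_set_eq, hGd,
            SimpleGraph.edgeSet_deleteEdges]
          have h5 : (G.edgeSet \ {s(u,v)}).ncard = G.edgeSet.ncard - 1 :=
            Set.ncard_diff_singleton_of_mem (s := G.edgeSet) (a := s(u,v)) huv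
          have h6 : 1 ≤ G.edgeSet.ncard := by
            rw [← Nat.card_coe_set_eq]
            exact hecard
          omega
        have hGccard : Nat.card (contractG G u v huvne).edgeSet ≤ Nat.card Gd.edgeSet := by
          rw [Nat.card_coe_set_eq, Nat.card_coe_set_eq]
          have hsub : (contractG G u v huvne).edgeSet ⊆
              Sym2.map (cmap u v huvne) '' Gd.edgeSet := by
            intro e he
            induction e using Sym2.ind with
            | _ a b =>
              rw [SimpleGraph.mem_edgeSet] at he
              obtain ⟨hab, hrel⟩ := he
              rcases hrel with ⟨x, y, hxy, hne, ha, hb⟩ | ⟨x, y, hxy, hne, hb, ha⟩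
              · exact ⟨s(x,y), SimpleGraph.deleteEdges_adj.mpr ⟨hxy, by simpa using hne⟩,
                  by rw [Sym2.map_pair_eq, ← ha, ← hb]⟩
              · exact ⟨s(x,y), SimpleGraph.deleteEdges_adj.mpr ⟨hxy, by simpa using hne⟩,
                  by rw [Sym2.map_pair_eq, ← ha, ← hb, Sym2.eq_swap]⟩
          calc (contractG G u v huvne).edgeSet.ncard
              ≤ (Sym2.map (cmap u v huvne) '' Gd.edgeSet).ncard :=
                Set.ncard_le_ncard hsub (Set.toFinite _)
            _ ≤ Gd.edgeSet.ncard := Set.ncard_image_le (Set.toFinite _)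
        have hcardv : Fintype.card {y : β // y ≠ v} = Fintype.card β - 1 :=
          card_subtype_ne v
        have hmd : Fintype.card β + Nat.card Gd.edgeSet ≤ N := by omega
        have hmc : Fintype.card {y : β // y ≠ v} +
            Nat.card (contractG G u v huvne).edgeSet ≤ N := by
          rw [hcardv]; omega
        obtain ⟨qd, hqd1, hqd2⟩ := IH _ Gd hmd hGdconn
        obtain ⟨qc, hqc1, hqc2⟩ := IH _ (contractG G u v huvne) hmc hGcconn
        refine ⟨qd - qc, ?_, ?_⟩
        · intro k hk
          have hiff : ∀ ψ : β → Fin k,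
              ((∀ ⦃x y⦄, Gd.Adj x y → ψ x ≠ ψ y) ∧ ¬ ψ u = ψ v) ↔
              (∀ ⦃x y⦄, G.Adj x y → ψ x ≠ ψ y) := by
            intro ψ
            constructor
            · rintro ⟨hp, hne⟩ x y hxy
              by_cases he : s(x,y) = s(u,v)
              · rcases Sym2.eq_iff.mp he with ⟨rfl, rfl⟩ | ⟨rfl, rfl⟩
                · exact hne
                · exact fun hh => hne hh.symm
              · exact hp (SimpleGraph.deleteEdges_adj.mpr ⟨hxy, by simpa using he⟩)
            · intro hp
              exact ⟨fun x y hxy => hp (SimpleGraph.deleteEdges_adj.mp hxy).1, hp huv⟩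
          have hsplit := natCard_split
            (fun ψ : β → Fin k => ∀ ⦃x y⦄, Gd.Adj x y → ψ x ≠ ψ y) (fun ψ => ψ u = ψ v)
          have hcc := contract_count (G := G) huvne k
          have hGcount : Nat.card {ψ : β → Fin k //
              (∀ ⦃x y⦄, Gd.Adj x y → ψ x ≠ ψ y) ∧ ¬ ψ u = ψ v} = properCount β G k := by
            unfold properCount
            exact Nat.card_congr (Equiv.subtypeEquivRight hiff)
          have hkey : properCount β Gd k =
              properCount _ (contractG G u v huvne) k + properCount β G k := by
            have hpcGd : properCount β Gd k =
                Nat.card {ψ : β → Fin k // ∀ ⦃x y⦄, Gd.Adj x y → ψ x ≠ ψ y} := rfl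
            rw [hcc, ← hGcount, hpcGd, ← hsplit]
          have hqd := hqd1 k hk
          have hqc := hqc1 k hk
          rw [eval_mul, eval_X] at hqd hqc
          rw [eval_mul, eval_X, eval_sub]
          rw [hkey] at hqd
          push_cast at hqd ⊢
          linear_combination hqd - hqc
        · intro lam h0 h1
          have h2 := hqd2 lam h0 h1
          have h3 := hqc2 lam h0 h1
          rw [hcardv] at h3
          obtain ⟨m, hm⟩ : ∃ m, Fintype.card β = m + 2 := ⟨Fintype.card β - 2, by omega⟩
          rw [hm] at h2 h3 ⊢
          have hred : m + 2 - 1 + 1 = m + 2 := by omega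
          rw [hred] at h3
          have e1 : (-1 : ℝ)^(m+2+1) = -(-1:ℝ)^(m+2) := by rw [pow_succ]; ring
          rw [e1] at h2 ⊢
          rw [eval_sub]
          rw [show -((-1:ℝ)^(m+2)) * (eval lam qd - eval lam qc) =
            (-((-1:ℝ)^(m+2)) * eval lam qd) + ((-1:ℝ)^(m+2) * eval lam qc) from by ring]
          exact add_pos h2 h3

end GraphMain

section Hyper

variable {α : Type}

def touchRel (B : Finset (Finset α)) (x y : α) : Prop := ∃ f ∈ B, x ∈ f ∧ y ∈ f

lemma touchRel_symm {B : Finset (Finset α)} {x y : α} (h : touchRel B x y) : touchRel B y x := by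
  obtain ⟨f, hf, hx, hy⟩ := h; exact ⟨f, hf, hy, hx⟩

def bSetoid (B : Finset (Finset α)) : Setoid α := Relation.EqvGen.setoid (touchRel B)

lemma bSetoid_r {B : Finset (Finset α)} {x y : α} :
    (bSetoid B).r x y ↔ Relation.EqvGen (touchRel B) x y := Iff.rfl

lemma const_of_eqvGen {k : ℕ} {B : Finset (Finset α)} {φ : α → Fin k}
    (hφ : ∀ f ∈ B, ∀ x ∈ f, ∀ y ∈ f, φ x = φ y) {x y : α}
    (h : Relation.EqvGen (touchRel B) x y) : φ x = φ y := by
  induction h with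
  | rel a b hab => obtain ⟨f, hf, ha, hb⟩ := hab; exact hφ f hf a ha b hb
  | refl a => rfl
  | symm a b _ ih => exact ih.symm
  | trans a b c _ _ ih1 ih2 => exact ih1.trans ih2

lemma pair_card {x y : α} [DecidableEq α] (h : x ≠ y) : ({x, y} : Finset α).card = 2 :=
  Finset.card_pair h

lemma pair_ne_of_proper {k : ℕ} {φ : α → Fin k} {x y : α} [DecidableEq α] (hxy : x ≠ y)
    (h : ∃ u ∈ ({x, y} : Finset α), ∃ v ∈ ({x, y} : Finset α), φ u ≠ φ v) : φ x ≠ φ y := by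
  obtain ⟨u, hu, v, hv, huv⟩ := h
  rw [Finset.mem_insert, Finset.mem_singleton] at hu hv
  intro hcon
  rcases hu with rfl | rfl <;> rcases hv with rfl | rfl
  · exact huv rfl
  · exact huv hcon
  · exact huv hcon.symm
  · exact huv rfl

/-- The quotient graph of the 2-edges after contracting each edge of `B`. -/
def GB [DecidableEq α] (E B : Finset (Finset α)) : SimpleGraph (Quotient (bSetoid B)) :=
  SimpleGraph.fromRel fun a b => ∃ x y : α, x ≠ y ∧ ({x, y} : Finset α) ∈ E ∧
    a = Quotient.mk (bSetoid B) x ∧ b = Quotient.mk (bSetoid B) y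

/-- nonvanishing `B`: no 2-edge of `E` is collapsed by the contraction. -/
def NoV [DecidableEq α] (E B : Finset (Finset α)) : Prop :=
  ∀ x y : α, x ≠ y → ({x, y} : Finset α) ∈ E → ¬ Relation.EqvGen (touchRel B) x y

def monoSet [DecidableEq α] (E B : Finset (Finset α)) (k : ℕ) :=
  {φ : α → Fin k // (∀ e ∈ E, e.card = 2 → ∃ u ∈ e, ∃ v ∈ e, φ u ≠ φ v) ∧
    (∀ f ∈ B, ∀ x ∈ f, ∀ y ∈ f, φ x = φ y)}

lemma countB_eq [Fintype α] [DecidableEq α] (E B : Finset (Finset α)) (k : ℕ)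
    (hNoV : NoV E B) :
    Nat.card (monoSet E B k) =
      properCount (Quotient (bSetoid B)) (GB E B) k := by
  classical
  refine Nat.card_congr ?_
  refine ⟨fun φ => ⟨Quotient.lift φ.1 (fun a b hab => const_of_eqvGen φ.2.2 hab), ?_⟩,
    fun ψ => ⟨fun x => ψ.1 (Quotient.mk (bSetoid B) x), ?_, ?_⟩, ?_, ?_⟩
  · -- lifted coloring is proper
    rintro a b ⟨hab, hrel⟩
    have key : ∀ x y : α, x ≠ y → ({x, y} : Finset α) ∈ E →
        a = Quotient.mk (bSetoid B) x → b = Quotient.mk (bSetoid B) y →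
        Quotient.lift φ.1 (fun a b hab => const_of_eqvGen φ.2.2 hab) a ≠
        Quotient.lift φ.1 (fun a b hab => const_of_eqvGen φ.2.2 hab) b := by
      rintro x y hxy he rfl rfl
      have h2 : φ.1 x ≠ φ.1 y :=
        pair_ne_of_proper hxy (φ.2.1 _ he (pair_card hxy))
      exact h2
    rcases hrel with ⟨x, y, hxy, he, ha, hb⟩ | ⟨x, y, hxy, he, hb, ha⟩
    · exact key x y hxy he ha hb
    · exact key y x hxy.symm (by rwa [Finset.pair_comm]) ha hb
  · -- P2
    intro e he hcard
    obtain ⟨x, y, hxy, rfl⟩ := Finset.card_eq_two.mp hcard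
    refine ⟨x, Finset.mem_insert_self _ _, y,
      Finset.mem_insert_of_mem (Finset.mem_singleton_self _), ?_⟩
    have hne : Quotient.mk (bSetoid B) x ≠ Quotient.mk (bSetoid B) y := by
      intro hcon
      exact hNoV x y hxy he (Quotient.exact hcon)
    exact ψ.2 ⟨hne, Or.inl ⟨x, y, hxy, he, rfl, rfl⟩⟩
  · -- const on B
    intro f hf x hx y hy
    have heq : Quotient.mk (bSetoid B) x = Quotient.mk (bSetoid B) y :=
      Quotient.sound (Relation.EqvGen.rel _ _ ⟨f, hf, hx, hy⟩)
    exact congrArg ψ.1 heq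
  · intro φ
    apply Subtype.ext
    funext x
    rfl
  · intro ψ
    apply Subtype.ext
    funext a
    induction a using Quotient.ind with
    | _ x => rfl

lemma countB_zero [Fintype α] [DecidableEq α] (E B : Finset (Finset α)) (k : ℕ)
    (hV : ¬ NoV E B) : Nat.card (monoSet E B k) = 0 := by
  rw [NoV] at hV
  push_neg at hV
  obtain ⟨x, y, hxy, he, heqv⟩ := hV
  have : IsEmpty (monoSet E B k) := by
    constructor
    rintro ⟨φ, h1, h2⟩
    have hconst : φ x = φ y := const_of_eqvGen h2 heqv
    exact pair_ne_of_proper hxy (h1 _ he (pair_card hxy)) hconst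
  exact Nat.card_of_isEmpty

lemma GB_connected [Fintype α] [DecidableEq α] (E B : Finset (Finset α))
    (hconn : (pairGraph (E.filter fun e => e.card = 2)).Connected) :
    (GB E B).Connected := by
  apply connected_map (Quotient.mk (bSetoid B)) Quotient.mk_surjective _ hconn
  intro x y hxy
  obtain ⟨hne, hmem⟩ := hxy
  rw [Finset.mem_filter] at hmem
  by_cases hq : Quotient.mk (bSetoid B) x = Quotient.mk (bSetoid B) y
  · right; exact hq
  · left
    exact ⟨hq, Or.inl ⟨x, y, hne, hmem.1, rfl, rfl⟩⟩

lemma indicator_prod (S : Finset (Finset α)) (c : Finset α → Prop) [DecidablePred c] :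
    (∏ f ∈ S, if c f then (1:ℝ) else 0) = if (∀ f ∈ S, c f) then (1:ℝ) else 0 :=
  Finset.prod_boole

lemma inclusion_exclusion [Fintype α] [DecidableEq α] (E : Finset (Finset α))
    (hne : ∀ e ∈ E, e.Nonempty) (k : ℕ) :
    (countColorings E k : ℝ) =
      ∑ B ∈ (E.filter fun e => e.card ≠ 2).powerset,
        (-1 : ℝ)^B.card * (Nat.card (monoSet E B k) : ℝ) := by
  classical
  set Ebig := E.filter fun e => e.card ≠ 2 with hEbig
  -- express countColorings as a sum of indicators
  have h1 : (countColorings E k : ℝ) =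
      ∑ φ : α → Fin k, if IsWeakProper E φ then (1:ℝ) else 0 := by
    rw [countColorings, Finset.card_filter]
    push_cast
    rfl
  -- pointwise identity
  have h2 : ∀ φ : α → Fin k,
      (if IsWeakProper E φ then (1:ℝ) else 0) =
      (if (∀ e ∈ E, e.card = 2 → ∃ u ∈ e, ∃ v ∈ e, φ u ≠ φ v) then (1:ℝ) else 0) *
        ∏ f ∈ Ebig, ((1:ℝ) - if (∀ x ∈ f, ∀ y ∈ f, φ x = φ y) then (1:ℝ) else 0) := by
    intro φ
    by_cases hP2 : ∀ e ∈ E, e.card = 2 → ∃ u ∈ e, ∃ v ∈ e, φ u ≠ φ v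
    · rw [if_pos hP2, one_mul]
      by_cases hall : ∀ f ∈ Ebig, ¬ (∀ x ∈ f, ∀ y ∈ f, φ x = φ y)
      · have hproper : IsWeakProper E φ := by
          intro e he
          by_cases hc : e.card = 2
          · exact hP2 e he hc
          · have hf : e ∈ Ebig := by rw [hEbig, Finset.mem_filter]; exact ⟨he, hc⟩
            have := hall e hf
            push_neg at this
            obtain ⟨u, hu, v, hv, huv⟩ := this
            exact ⟨u, hu, v, hv, huv⟩
        rw [if_pos hproper]
        rw [Finset.prod_congr rfl (fun f hf => by rw [if_neg (hall f hf), sub_zero])]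
        rw [Finset.prod_const_one]
      · push_neg at hall
        obtain ⟨f0, hf0, hconst⟩ := hall
        have hnotproper : ¬ IsWeakProper E φ := by
          intro hp
          have hf0E : f0 ∈ E := (Finset.mem_filter.mp (hEbig ▸ hf0)).1
          obtain ⟨u, hu, v, hv, huv⟩ := hp f0 hf0E
          exact huv (hconst u hu v hv)
        rw [if_neg hnotproper]
        rw [Finset.prod_eq_zero hf0 (by rw [if_pos hconst, sub_self])]
    · have hnotproper : ¬ IsWeakProper E φ := by
        intro hp
        apply hP2
        intro e he _
        exact hp e he
      rw [if_neg hnotproper, if_neg hP2, zero_mul]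
  rw [h1, Finset.sum_congr rfl (fun φ _ => h2 φ)]
  -- expand the product
  have h3 : ∀ φ : α → Fin k,
      (∏ f ∈ Ebig, ((1:ℝ) - if (∀ x ∈ f, ∀ y ∈ f, φ x = φ y) then (1:ℝ) else 0)) =
      ∑ B ∈ Ebig.powerset, (-1:ℝ)^B.card *
        ∏ f ∈ B, (if (∀ x ∈ f, ∀ y ∈ f, φ x = φ y) then (1:ℝ) else 0) := by
    intro φ
    have := Finset.prod_add
      (fun f => -(if (∀ x ∈ f, ∀ y ∈ f, φ x = φ y) then (1:ℝ) else 0))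
      (fun _ => (1:ℝ)) Ebig
    simp only [Finset.prod_const_one, mul_one] at this
    calc (∏ f ∈ Ebig, ((1:ℝ) - if (∀ x ∈ f, ∀ y ∈ f, φ x = φ y) then (1:ℝ) else 0))
        = ∏ f ∈ Ebig, ((-(if (∀ x ∈ f, ∀ y ∈ f, φ x = φ y) then (1:ℝ) else 0)) + 1) := by
          apply Finset.prod_congr rfl; intro f _; ring
      _ = ∑ B ∈ Ebig.powerset,
            ∏ f ∈ B, (-(if (∀ x ∈ f, ∀ y ∈ f, φ x = φ y) then (1:ℝ) else 0)) := this
      _ = ∑ B ∈ Ebig.powerset, (-1:ℝ)^B.card *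
            ∏ f ∈ B, (if (∀ x ∈ f, ∀ y ∈ f, φ x = φ y) then (1:ℝ) else 0) := by
          apply Finset.sum_congr rfl; intro B _
          rw [← Finset.prod_const (-1:ℝ), ← Finset.prod_mul_distrib]
          apply Finset.prod_congr rfl; intro f _; ring
  rw [Finset.sum_congr rfl (fun φ _ => by rw [h3 φ, Finset.mul_sum])]
  rw [Finset.sum_comm]
  apply Finset.sum_congr rfl
  intro B hB
  -- inner sum equals (−1)^|B| * Nat.card
  have h4 : ∀ φ : α → Fin k,
      (if (∀ e ∈ E, e.card = 2 → ∃ u ∈ e, ∃ v ∈ e, φ u ≠ φ v) then (1:ℝ) else 0) *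
        ((-1:ℝ)^B.card * ∏ f ∈ B, (if (∀ x ∈ f, ∀ y ∈ f, φ x = φ y) then (1:ℝ) else 0)) =
      (-1:ℝ)^B.card * (if ((∀ e ∈ E, e.card = 2 → ∃ u ∈ e, ∃ v ∈ e, φ u ≠ φ v) ∧
        (∀ f ∈ B, ∀ x ∈ f, ∀ y ∈ f, φ x = φ y)) then (1:ℝ) else 0) := by
    intro φ
    rw [Finset.prod_boole]
    by_cases hP2 : ∀ e ∈ E, e.card = 2 → ∃ u ∈ e, ∃ v ∈ e, φ u ≠ φ v <;>
      by_cases hCst : ∀ f ∈ B, ∀ x ∈ f, ∀ y ∈ f, φ x = φ y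
    · rw [if_pos hP2, if_pos hCst, if_pos (show _ ∧ _ from ⟨hP2, hCst⟩)]; ring
    · rw [if_pos hP2, if_neg hCst, if_neg (show ¬ (_ ∧ _) from fun hc => hCst hc.2)]; ring
    · rw [if_neg hP2, if_pos hCst, if_neg (show ¬ (_ ∧ _) from fun hc => hP2 hc.1)]; ring
    · rw [if_neg hP2, if_neg hCst, if_neg (show ¬ (_ ∧ _) from fun hc => hP2 hc.1)]; ring
  rw [Finset.sum_congr rfl (fun φ _ => h4 φ), ← Finset.mul_sum]
  congr 1
  have h5 : Nat.card (monoSet E B k) =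
      (Finset.univ.filter fun φ : α → Fin k =>
        ((∀ e ∈ E, e.card = 2 → ∃ u ∈ e, ∃ v ∈ e, φ u ≠ φ v) ∧
          (∀ f ∈ B, ∀ x ∈ f, ∀ y ∈ f, φ x = φ y))).card := by
    rw [monoSet, Nat.card_eq_fintype_card, Fintype.card_subtype]
  rw [h5, Finset.card_filter]
  push_cast
  rfl

end Hyper

section Parity

variable {α : Type}

def EdgeChain (B : Finset (Finset α)) (z : ℕ → α) (g : ℕ → Finset α) (m : ℕ) : Prop :=
  ∀ i < m, g i ∈ B ∧ z i ∈ g i ∧ z (i+1) ∈ g i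

lemma rtg_symm {r : α → α → Prop} (hsymm : ∀ x y, r x y → r y x) {x y : α}
    (h : Relation.ReflTransGen r x y) : Relation.ReflTransGen r y x := by
  induction h with
  | refl => exact Relation.ReflTransGen.refl
  | tail _ hbc ih =>
    exact Relation.ReflTransGen.trans (Relation.ReflTransGen.single (hsymm _ _ hbc)) ih

lemma eqvGen_to_rtg {r : α → α → Prop} (hsymm : ∀ x y, r x y → r y x) {x y : α}
    (h : Relation.EqvGen r x y) : Relation.ReflTransGen r x y := by
  induction h with
  | rel a b hab => exact Relation.ReflTransGen.single hab
  | refl a => exact Relation.ReflTransGen.refl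
  | symm a b _ ih => exact rtg_symm hsymm ih
  | trans a b c _ _ ih1 ih2 => exact ih1.trans ih2

lemma rtg_chain {B : Finset (Finset α)} {x y : α}
    (h : Relation.ReflTransGen (touchRel B) x y) :
    ∃ (m : ℕ) (z : ℕ → α) (g : ℕ → Finset α), z 0 = x ∧ z m = y ∧ EdgeChain B z g m := by
  induction h with
  | refl => exact ⟨0, fun _ => x, fun _ => ∅, rfl, rfl, fun i hi => absurd hi (by omega)⟩
  | @tail b c _ hbc ih =>
    obtain ⟨m, z, g, hz0, hzm, hch⟩ := ih
    obtain ⟨f, hf, hb, hc⟩ := hbc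
    refine ⟨m+1, fun l => if l ≤ m then z l else c, fun l => if l < m then g l else f,
      ?_, ?_, ?_⟩
    · dsimp only; rw [if_pos (by omega)]; exact hz0
    · dsimp only; rw [if_neg (by omega)]
    · intro i hi
      dsimp only
      by_cases him : i < m
      · rw [if_pos him, if_pos (by omega : i ≤ m), if_pos (by omega : i + 1 ≤ m)]
        exact hch i him
      · have hieq : i = m := by omega
        subst hieq
        rw [if_neg (by omega), if_pos (le_refl _), if_neg (by omega)]
        exact ⟨hf, hzm ▸ hb, hc⟩

lemma chain_splice_v {B : Finset (Finset α)} {z : ℕ → α} {g : ℕ → Finset α} {m i j : ℕ}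
    (h : EdgeChain B z g m) (hij : i ≤ j) (hjm : j ≤ m) (hz : z i = z j) :
    ∃ z' g', z' 0 = z 0 ∧ z' (m - (j - i)) = z m ∧ EdgeChain B z' g' (m - (j - i)) := by
  refine ⟨fun l => if l ≤ i then z l else z (l + (j - i)),
          fun l => if l < i then g l else g (l + (j - i)), ?_, ?_, ?_⟩
  · dsimp only; rw [if_pos (by omega)]
  · dsimp only
    by_cases hle : m - (j - i) ≤ i
    · rw [if_pos hle]
      have hm : m = j := by omega
      have hmi : m - (j - i) = i := by omega
      rw [hmi, hz, hm]
    · rw [if_neg hle]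
      congr 1
      omega
  · intro l hl
    dsimp only
    by_cases hli : l < i
    · rw [if_pos hli, if_pos (le_of_lt hli), if_pos (by omega : l + 1 ≤ i)]
      exact h l (by omega)
    · rw [if_neg hli, if_neg (by omega : ¬ (l + 1 ≤ i))]
      by_cases hle : l ≤ i
      · rw [if_pos hle]
        have hmem := h (l + (j - i)) (by omega)
        have hz2 : z l = z (l + (j - i)) := by
          have hleq : l = i := by omega
          subst hleq
          rw [hz]; congr 1; omega
        refine ⟨hmem.1, ?_, ?_⟩
        · rw [hz2]; exact hmem.2.1
        · have he : l + 1 + (j - i) = l + (j - i) + 1 := by omega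
          rw [he]; exact hmem.2.2
      · rw [if_neg hle]
        have hmem := h (l + (j - i)) (by omega)
        refine ⟨hmem.1, hmem.2.1, ?_⟩
        have he : l + 1 + (j - i) = l + (j - i) + 1 := by omega
        rw [he]; exact hmem.2.2

lemma chain_splice_e {B : Finset (Finset α)} {z : ℕ → α} {g : ℕ → Finset α} {m i j : ℕ}
    (h : EdgeChain B z g m) (hij : i < j) (hjm : j < m) (hg : g i = g j) :
    ∃ z' g', z' 0 = z 0 ∧ z' (m - (j - i)) = z m ∧ EdgeChain B z' g' (m - (j - i)) := by
  refine ⟨fun l => if l ≤ i then z l else z (l + (j - i)),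
          fun l => if l < i then g l else g (l + (j - i)), ?_, ?_, ?_⟩
  · dsimp only; rw [if_pos (by omega)]
  · dsimp only
    rw [if_neg (by omega)]
    congr 1
    omega
  · intro l hl
    dsimp only
    by_cases hli : l < i
    · rw [if_pos hli, if_pos (le_of_lt hli), if_pos (by omega : l + 1 ≤ i)]
      exact h l (by omega)
    · rw [if_neg hli, if_neg (by omega : ¬ (l + 1 ≤ i))]
      by_cases hle : l ≤ i
      · rw [if_pos hle]
        have hli2 : l = i := by omega
        have hgj : g (l + (j - i)) = g j := by congr 1; omega
        have hmemi := h i (by omega)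
        have hmemj := h j (by omega)
        refine ⟨hgj ▸ hmemj.1, ?_, ?_⟩
        · rw [hgj, ← hg, hli2]; exact hmemi.2.1
        · have he : l + 1 + (j - i) = j + 1 := by omega
          rw [he, hgj]; exact hmemj.2.2
      · rw [if_neg hle]
        have hmem := h (l + (j - i)) (by omega)
        refine ⟨hmem.1, hmem.2.1, ?_⟩
        have he : l + 1 + (j - i) = l + (j - i) + 1 := by omega
        rw [he]; exact hmem.2.2

lemma no_eqv_in_f [DecidableEq α] {E B : Finset (Finset α)}
    (hBE : B ⊆ E)
    (hcyc : ∀ (t : ℕ) (v : ZMod t → α) (es : ZMod t → Finset α), IsCycle E t v es →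
      ∃ x y : α, x ≠ y ∧ (∃ i, x ∈ es i) ∧ (∃ j, y ∈ es j) ∧ ({x, y} : Finset α) ∈ E)
    (hNoV : NoV E B) {f : Finset α} (hf : f ∈ B) :
    ∀ x ∈ f, ∀ y ∈ f, x ≠ y → ¬ Relation.EqvGen (touchRel (B.erase f)) x y := by
  intro x hx y hy hxy heqv
  classical
  set B' := B.erase f with hB'
  have hchain : ∃ m, ∃ x' ∈ f, ∃ y' ∈ f, x' ≠ y' ∧
      ∃ z g, z 0 = x' ∧ z m = y' ∧ EdgeChain B' z g m := by
    obtain ⟨m, z, g, h0, hm, hch⟩ :=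
      rtg_chain (eqvGen_to_rtg (fun _ _ => touchRel_symm) heqv)
    exact ⟨m, x, hx, y, hy, hxy, z, g, h0, hm, hch⟩
  set m0 := Nat.find hchain with hm0def
  obtain ⟨x', hx'f, y', hy'f, hx'y', z, g, hz0, hzm, hch⟩ := Nat.find_spec hchain
  rw [← hm0def] at hzm hch
  have hm0pos : 1 ≤ m0 := by
    rcases Nat.eq_zero_or_pos m0 with h0 | h1
    · exfalso; apply hx'y'; rw [← hz0, ← hzm, h0]
    · exact h1
  have d1 : ∀ i j, i < j → j ≤ m0 → z i ≠ z j := by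
    intro i j hij hjm hzz
    obtain ⟨z', g', h0', hm', hch'⟩ := chain_splice_v hch (le_of_lt hij) hjm hzz
    exact Nat.find_min hchain (show m0 - (j - i) < m0 by omega)
      ⟨x', hx'f, y', hy'f, hx'y', z', g', by rw [h0', hz0], by rw [hm', hzm], hch'⟩
  have d2 : ∀ i j, i < j → j < m0 → g i ≠ g j := by
    intro i j hij hjm hgg
    obtain ⟨z', g', h0', hm', hch'⟩ := chain_splice_e hch hij hjm hgg
    exact Nat.find_min hchain (show m0 - (j - i) < m0 by omega)
      ⟨x', hx'f, y', hy'f, hx'y', z', g', by rw [h0', hz0], by rw [hm', hzm], hch'⟩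
  haveI : NeZero (m0 + 1) := ⟨Nat.succ_ne_zero m0⟩
  haveI : Fact (1 < m0 + 1) := ⟨by omega⟩
  set t := m0 + 1 with ht
  set v : ZMod t → α := fun i => z i.val with hv
  set es : ZMod t → Finset α := fun i => if i.val = m0 then f else g i.val with hes
  have hvallt : ∀ i : ZMod t, i.val < m0 + 1 := fun i => ZMod.val_lt i
  have hvalinj : ∀ i j : ZMod t, i.val = j.val → i = j := by
    intro i j hij
    rw [← ZMod.natCast_zmod_val i, ← ZMod.natCast_zmod_val j, hij]
  have hsucc : ∀ i : ZMod t, (i + 1).val = (i.val + 1) % (m0 + 1) := by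
    intro i
    rw [ZMod.val_add, ZMod.val_one]
  have hchB' : ∀ i : ZMod t, i.val ≠ m0 → g i.val ∈ B' ∧ z i.val ∈ g i.val ∧
      z (i.val + 1) ∈ g i.val := by
    intro i hi
    exact hch i.val (by have := hvallt i; omega)
  have hcycle : IsCycle E t v es := by
    refine ⟨by omega, ?_, ?_, ?_, ?_⟩
    · intro i j hij
      by_cases h : i.val = j.val
      · exact hvalinj _ _ h
      · exfalso
        simp only [hv] at hij
        rcases Nat.lt_or_ge i.val j.val with hlt | hge
        · exact d1 i.val j.val hlt (by have := hvallt j; omega) hij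
        · exact d1 j.val i.val (by omega) (by have := hvallt i; omega) hij.symm
    · intro i j hij
      by_cases h : i.val = j.val
      · exact hvalinj _ _ h
      · exfalso
        simp only [hes] at hij
        by_cases hi : i.val = m0 <;> by_cases hj : j.val = m0
        · exact h (hi.trans hj.symm)
        · rw [if_pos hi, if_neg hj] at hij
          exact (Finset.mem_erase.mp (hchB' j hj).1).1 hij.symm
        · rw [if_neg hi, if_pos hj] at hij
          exact (Finset.mem_erase.mp (hchB' i hi).1).1 hij
        · rw [if_neg hi, if_neg hj] at hij
          rcases Nat.lt_or_ge i.val j.val with hlt | hge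
          · exact d2 _ _ hlt (by have := hvallt j; omega) hij
          · exact d2 _ _ (by omega) (by have := hvallt i; omega) hij.symm
    · intro i
      simp only [hes]
      by_cases hi : i.val = m0
      · rw [if_pos hi]; exact hBE hf
      · rw [if_neg hi]
        exact hBE (Finset.mem_of_mem_erase (hchB' i hi).1)
    · intro i
      simp only [hv, hes]
      by_cases hi : i.val = m0
      · rw [if_pos hi]
        constructor
        · rw [hi, hzm]; exact hy'f
        · have h0 : (i + 1).val = 0 := by rw [hsucc, hi, Nat.mod_self]
          rw [h0, hz0]; exact hx'f
      · rw [if_neg hi]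
        have hmem := hchB' i hi
        constructor
        · exact hmem.2.1
        · have h1 : (i + 1).val = i.val + 1 := by
            rw [hsucc, Nat.mod_eq_of_lt (by have := hvallt i; omega)]
          rw [h1]; exact hmem.2.2
  obtain ⟨a, b, hab, ⟨i, hai⟩, ⟨j, hbj⟩, habE⟩ := hcyc t v es hcycle
  have hesB : ∀ i : ZMod t, es i ∈ B := by
    intro i
    simp only [hes]
    by_cases hi : i.val = m0
    · rw [if_pos hi]; exact hf
    · rw [if_neg hi]
      exact Finset.mem_of_mem_erase (hchB' i hi).1
  have step : ∀ l : ZMod t, Relation.EqvGen (touchRel B) (v l) (v (l + 1)) := by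
    intro l
    exact Relation.EqvGen.rel _ _
      ⟨es l, hesB l, (hcycle.2.2.2.2 l).1, (hcycle.2.2.2.2 l).2⟩
  have travel : ∀ (s : ℕ) (l : ZMod t),
      Relation.EqvGen (touchRel B) (v l) (v (l + (s : ZMod t))) := by
    intro s
    induction s with
    | zero =>
      intro l
      rw [Nat.cast_zero, add_zero]
      exact Relation.EqvGen.refl _
    | succ s ih =>
      intro l
      have heq : l + ((s + 1 : ℕ) : ZMod t) = (l + (s : ZMod t)) + 1 := by push_cast; ring
      rw [heq]
      exact Relation.EqvGen.trans _ _ _ (ih l) (step (l + (s : ZMod t)))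
  have hijeqv : Relation.EqvGen (touchRel B) (v i) (v j) := by
    have heq : i + (((j - i).val : ℕ) : ZMod t) = j := by
      rw [ZMod.natCast_zmod_val]; ring
    rw [← heq]
    exact travel (j - i).val i
  have hav : Relation.EqvGen (touchRel B) a (v i) :=
    Relation.EqvGen.rel _ _ ⟨es i, hesB i, hai, (hcycle.2.2.2.2 i).1⟩
  have hbv : Relation.EqvGen (touchRel B) b (v j) :=
    Relation.EqvGen.rel _ _ ⟨es j, hesB j, hbj, (hcycle.2.2.2.2 j).1⟩
  exact hNoV a b hab habE
    (Relation.EqvGen.trans _ _ _ (Relation.EqvGen.trans _ _ _ hav hijeqv)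
      (Relation.EqvGen.symm _ _ hbv))

end Parity

section Parity2

variable {α : Type}

lemma eqvGen_mono' {B B' : Finset (Finset α)} (h : B' ⊆ B) {x y : α}
    (hxy : Relation.EqvGen (touchRel B') x y) : Relation.EqvGen (touchRel B) x y := by
  refine Relation.EqvGen.mono ?_ _ _ hxy
  rintro a b ⟨f, hf, ha, hb⟩
  exact ⟨f, h hf, ha, hb⟩

lemma eqvGen_empty {x y : α}
    (h : Relation.EqvGen (touchRel (∅ : Finset (Finset α))) x y) : x = y := by
  induction h with
  | rel a b hab => obtain ⟨f, hf, -, -⟩ := hab; exact absurd hf (Finset.notMem_empty f)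
  | refl a => rfl
  | symm a b _ ih => exact ih.symm
  | trans a b c _ _ ih1 ih2 => exact ih1.trans ih2

lemma NoV_mono [DecidableEq α] {E B B' : Finset (Finset α)} (h : B' ⊆ B)
    (hNoV : NoV E B) : NoV E B' :=
  fun x y hxy he hEq => hNoV x y hxy he (eqvGen_mono' h hEq)

lemma NoV_empty [DecidableEq α] (E : Finset (Finset α)) : NoV E ∅ :=
  fun x y hxy _ hEq => hxy (eqvGen_empty hEq)

lemma card_quotient_empty : Nat.card (Quotient (bSetoid (∅ : Finset (Finset α)))) =
    Nat.card α := by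
  refine Nat.card_congr ⟨Quotient.lift id (fun a b hab => eqvGen_empty hab),
    Quotient.mk _, ?_, ?_⟩
  · intro q
    induction q using Quotient.ind with
    | _ x => rfl
  · intro x
    rfl

lemma eqvGen_insert [DecidableEq α] {B' : Finset (Finset α)} {f : Finset α} (x y : α) :
    Relation.EqvGen (touchRel (insert f B')) x y ↔
      (Relation.EqvGen (touchRel B') x y ∨
       ((∃ a ∈ f, Relation.EqvGen (touchRel B') x a) ∧
        (∃ b ∈ f, Relation.EqvGen (touchRel B') y b))) := by
  constructor
  · intro h
    induction h with
    | rel a b hab =>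
      obtain ⟨g, hg, ha, hb⟩ := hab
      rcases Finset.mem_insert.mp hg with rfl | hg'
      · exact Or.inr ⟨⟨a, ha, Relation.EqvGen.refl _⟩, ⟨b, hb, Relation.EqvGen.refl _⟩⟩
      · exact Or.inl (Relation.EqvGen.rel _ _ ⟨g, hg', ha, hb⟩)
    | refl a => exact Or.inl (Relation.EqvGen.refl _)
    | symm a b _ ih =>
      rcases ih with h1 | ⟨h1, h2⟩
      · exact Or.inl (Relation.EqvGen.symm _ _ h1)
      · exact Or.inr ⟨h2, h1⟩
    | trans a b c _ _ ih1 ih2 =>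
      rcases ih1 with h1 | ⟨h1a, h1b⟩ <;> rcases ih2 with h2 | ⟨h2a, h2b⟩
      · exact Or.inl (Relation.EqvGen.trans _ _ _ h1 h2)
      · obtain ⟨u, hu, hbu⟩ := h2a
        exact Or.inr ⟨⟨u, hu, Relation.EqvGen.trans _ _ _ h1 hbu⟩, h2b⟩
      · obtain ⟨u, hu, hbu⟩ := h1b
        exact Or.inr ⟨h1a, ⟨u, hu, Relation.EqvGen.trans _ _ _
          (Relation.EqvGen.symm _ _ h2) hbu⟩⟩
      · exact Or.inr ⟨h1a, h2b⟩
  · intro h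
    rcases h with h | ⟨⟨a, ha, hxa⟩, ⟨b, hb, hyb⟩⟩
    · exact eqvGen_mono' (Finset.subset_insert f B') h
    · have h1 : Relation.EqvGen (touchRel (insert f B')) x a :=
        eqvGen_mono' (Finset.subset_insert f B') hxa
      have h2 : Relation.EqvGen (touchRel (insert f B')) a b :=
        Relation.EqvGen.rel _ _ ⟨f, Finset.mem_insert_self _ _, ha, hb⟩
      have h3 : Relation.EqvGen (touchRel (insert f B')) y b :=
        eqvGen_mono' (Finset.subset_insert f B') hyb
      exact Relation.EqvGen.trans _ _ _ (Relation.EqvGen.trans _ _ _ h1 h2)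
        (Relation.EqvGen.symm _ _ h3)

lemma card_quotient_insert [Fintype α] [DecidableEq α] {B' : Finset (Finset α)}
    {f : Finset α} (hfne : f.Nonempty)
    (hdist : ∀ x ∈ f, ∀ y ∈ f, x ≠ y → ¬ Relation.EqvGen (touchRel B') x y) :
    Nat.card (Quotient (bSetoid (insert f B'))) + f.card =
      Nat.card (Quotient (bSetoid B')) + 1 := by
  classical
  letI : Fintype (Quotient (bSetoid (insert f B'))) := Fintype.ofFinite _
  letI : Fintype (Quotient (bSetoid B')) := Fintype.ofFinite _
  rw [Nat.card_eq_fintype_card, Nat.card_eq_fintype_card]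
  set π : Quotient (bSetoid B') → Quotient (bSetoid (insert f B')) :=
    Quotient.lift (Quotient.mk (bSetoid (insert f B')))
      (fun a b hab => Quotient.sound (eqvGen_mono' (Finset.subset_insert f B') hab))
    with hπ
  have hπmk : ∀ x : α, π (Quotient.mk (bSetoid B') x) =
      Quotient.mk (bSetoid (insert f B')) x := fun x => rfl
  obtain ⟨x0, hx0⟩ := hfne
  set T : Finset (Quotient (bSetoid B')) := f.image (Quotient.mk (bSetoid B')) with hT
  have hTcard : T.card = f.card := by
    rw [hT]
    apply Finset.card_image_of_injOn
    intro a ha b hb hab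
    by_contra hne
    exact hdist a ha b hb hne (Quotient.exact hab)
  set q0 : Quotient (bSetoid (insert f B')) := Quotient.mk _ x0 with hq0
  -- fiber characterization
  have hfiber : ∀ s : Quotient (bSetoid B'), π s = q0 ↔ s ∈ T := by
    intro s
    obtain ⟨c, rfl⟩ := Quotient.exists_rep s
    constructor
    · intro h
      have hcx : Relation.EqvGen (touchRel (insert f B')) c x0 := Quotient.exact h
      rw [eqvGen_insert] at hcx
      rcases hcx with h1 | ⟨⟨a, ha, hca⟩, -⟩
      · rw [hT, Finset.mem_image]
        exact ⟨x0, hx0, (Quotient.sound h1).symm⟩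
      · rw [hT, Finset.mem_image]
        exact ⟨a, ha, (Quotient.sound hca).symm⟩
    · intro h
      rw [hT, Finset.mem_image] at h
      obtain ⟨a, ha, heq⟩ := h
      have hca : Relation.EqvGen (touchRel B') c a :=
        Relation.EqvGen.symm _ _ (Quotient.exact heq)
      exact Quotient.sound ((eqvGen_insert c x0).mpr
        (Or.inr ⟨⟨a, ha, hca⟩, ⟨x0, hx0, Relation.EqvGen.refl _⟩⟩))
  have hπsurj : Function.Surjective π := by
    intro q
    obtain ⟨x, rfl⟩ := Quotient.exists_rep q
    exact ⟨Quotient.mk _ x, rfl⟩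
  -- count fibers
  have hcount : Fintype.card (Quotient (bSetoid B')) =
      ∑ q : Quotient (bSetoid (insert f B')),
        (Finset.univ.filter fun s => π s = q).card := by
    rw [← Finset.card_univ, Finset.card_eq_sum_card_fiberwise
      (fun s _ => Finset.mem_univ (π s))]
  have hfq0 : (Finset.univ.filter fun s => π s = q0).card = f.card := by
    rw [← hTcard]
    congr 1
    ext s
    rw [Finset.mem_filter]
    simp only [Finset.mem_univ, true_and]
    exact hfiber s
  have hfother : ∀ q, q ≠ q0 → (Finset.univ.filter fun s => π s = q).card = 1 := by
    intro q hq
    rw [Finset.card_eq_one]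
    obtain ⟨s, hs⟩ := hπsurj q
    obtain ⟨d, rfl⟩ := Quotient.exists_rep s
    refine ⟨Quotient.mk _ d, ?_⟩
    ext s'
    obtain ⟨c, rfl⟩ := Quotient.exists_rep s'
    rw [Finset.mem_filter, Finset.mem_singleton]
    simp only [Finset.mem_univ, true_and]
    constructor
    · intro hs'
      have hcd : Relation.EqvGen (touchRel (insert f B')) c d :=
        Quotient.exact (hs'.trans hs.symm)
      rw [eqvGen_insert] at hcd
      rcases hcd with h1 | ⟨⟨a, ha, hca⟩, ⟨b, hb, hdb⟩⟩
      · exact Quotient.sound h1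
      · exfalso
        apply hq
        rw [← hs']
        exact (hfiber (Quotient.mk _ c)).mpr (by
          rw [hT, Finset.mem_image]
          exact ⟨a, ha, (Quotient.sound hca).symm⟩)
    · intro h
      rw [h, hs]
  have hq0univ : q0 ∈ (Finset.univ : Finset (Quotient (bSetoid (insert f B')))) :=
    Finset.mem_univ _
  have hsum : ∑ q : Quotient (bSetoid (insert f B')),
      (Finset.univ.filter fun s => π s = q).card =
      f.card + ∑ q ∈ Finset.univ.erase q0, (Finset.univ.filter fun s => π s = q).card := by
    rw [← Finset.add_sum_erase _ _ hq0univ, hfq0]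
  have hsum2 : ∑ q ∈ Finset.univ.erase q0, (Finset.univ.filter fun s => π s = q).card =
      Fintype.card (Quotient (bSetoid (insert f B'))) - 1 := by
    rw [Finset.sum_congr rfl (fun q hq => hfother q (Finset.ne_of_mem_erase hq)),
      Finset.sum_const, smul_eq_mul, mul_one, Finset.card_erase_of_mem hq0univ,
      Finset.card_univ]
  have hpos : 1 ≤ Fintype.card (Quotient (bSetoid (insert f B'))) :=
    Fintype.card_pos_iff.mpr ⟨q0⟩
  omega

lemma parity_main [Fintype α] [DecidableEq α] (E : Finset (Finset α))
    (hcyc : ∀ (t : ℕ) (v : ZMod t → α) (es : ZMod t → Finset α), IsCycle E t v es →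
      ∃ x y : α, x ≠ y ∧ (∃ i, x ∈ es i) ∧ (∃ j, y ∈ es j) ∧ ({x, y} : Finset α) ∈ E)
    (hne : ∀ e ∈ E, e.Nonempty) :
    ∀ B : Finset (Finset α), B ⊆ E → NoV E B →
      Nat.card (Quotient (bSetoid B)) + ∑ f ∈ B, (f.card - 1) = Fintype.card α := by
  intro B
  induction B using Finset.strongInduction with
  | _ B ih =>
    intro hBE hNoV
    rcases Finset.eq_empty_or_nonempty B with rfl | ⟨f, hf⟩
    · rw [card_quotient_empty, Finset.sum_empty, Nat.card_eq_fintype_card, add_zero]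
    · have hins : insert f (B.erase f) = B := Finset.insert_erase hf
      have hdist : ∀ x ∈ f, ∀ y ∈ f, x ≠ y →
          ¬ Relation.EqvGen (touchRel (B.erase f)) x y := by
        intro x hx y hy hxy
        exact no_eqv_in_f hBE hcyc hNoV hf x hx y hy hxy
      have hcard := card_quotient_insert (hne f (hBE hf)) hdist
      rw [hins] at hcard
      have hih := ih (B.erase f) (Finset.erase_ssubset hf)
        (fun g hg => hBE (Finset.mem_of_mem_erase hg))
        (NoV_mono (Finset.erase_subset f B) hNoV)
      have hsum : ∑ g ∈ B, (g.card - 1) = (f.card - 1) + ∑ g ∈ B.erase f, (g.card - 1) :=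
        (Finset.add_sum_erase _ _ hf).symm
      have hfpos : 1 ≤ f.card := Finset.card_pos.mpr (hne f (hBE hf))
      omega

end Parity2

lemma even_finset_sum {ι : Type} (s : Finset ι) (f : ι → ℕ)
    (h : ∀ i ∈ s, Even (f i)) : Even (∑ i ∈ s, f i) := by
  classical
  induction s using Finset.induction with
  | empty => simp
  | @insert a s hx ih =>
    rw [Finset.sum_insert hx]
    exact (h _ (Finset.mem_insert_self _ _)).add
      (ih fun i hi => h i (Finset.mem_insert_of_mem hi))

/-- If `H ∈ L0'` and `p` is the chromatic polynomial of `H`, then `p = X·q` for a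
polynomial `q` with `(-1)^{|V|+1} q(λ) > 0` for all real `0 ≤ λ < 1`. -/
theorem stmt4 {α : Type} [Fintype α] [DecidableEq α] (E : Finset (Finset α))
    (hne : ∀ e ∈ E, e.Nonempty) (hE : MemL0' E)
    (p : Polynomial ℝ)
    (hp : ∀ k : ℕ, 0 < k → p.eval (k : ℝ) = countColorings E k) :
    ∃ q : Polynomial ℝ, p = Polynomial.X * q ∧
      ∀ lam : ℝ, 0 ≤ lam → lam < 1 →
        0 < (-1 : ℝ) ^ (Fintype.card α + 1) * q.eval lam := by
  classical
  obtain ⟨⟨heven, hcyc⟩, hconn⟩ := hE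
  set Ebig := E.filter (fun e => e.card ≠ 2) with hEbig
  have hex : ∀ B ∈ Ebig.powerset, ∃ qB : Polynomial ℝ,
      (∀ k : ℕ, 0 < k → (X * qB).eval (k : ℝ) = (Nat.card (monoSet E B k) : ℝ)) ∧
      (∀ lam : ℝ, 0 ≤ lam → lam < 1 →
        0 ≤ (-1 : ℝ) ^ (Fintype.card α + 1 + B.card) * qB.eval lam) ∧
      (B = ∅ → ∀ lam : ℝ, 0 ≤ lam → lam < 1 →
        0 < (-1 : ℝ) ^ (Fintype.card α + 1 + B.card) * qB.eval lam) := by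
    intro B hB
    rw [Finset.mem_powerset] at hB
    have hBE : B ⊆ E := hB.trans (Finset.filter_subset _ _)
    by_cases hV : NoV E B
    · -- nonvanishing case
      letI : Fintype (Quotient (bSetoid B)) := Fintype.ofFinite _
      obtain ⟨qB, hq1, hq2⟩ := graph_sign
        (Fintype.card (Quotient (bSetoid B)) + Nat.card (GB E B).edgeSet)
        (Quotient (bSetoid B)) (GB E B) (le_refl _) (GB_connected E B hconn)
      have hparity := parity_main E hcyc hne B hBE hV
      have hsum1 : ∑ f ∈ B, (f.card - 1) + B.card = ∑ f ∈ B, f.card := by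
        rw [Finset.card_eq_sum_ones, ← Finset.sum_add_distrib]
        apply Finset.sum_congr rfl
        intro f hf
        have h1 : 1 ≤ f.card := Finset.card_pos.mpr (hne f (hBE hf))
        omega
      have hexp : Fintype.card α + 1 + B.card =
          (Fintype.card (Quotient (bSetoid B)) + 1) + ∑ f ∈ B, f.card := by
        rw [Nat.card_eq_fintype_card] at hparity
        omega
      have hevensum : Even (∑ f ∈ B, f.card) :=
        even_finset_sum _ _ (fun f hf => heven f (hBE hf))
      refine ⟨qB, ?_, ?_, ?_⟩
      · intro k hk
        rw [countB_eq E B k hV]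
        exact hq1 k hk
      · intro lam h0 h1
        have h2 := hq2 lam h0 h1
        rw [hexp, pow_add, Even.neg_one_pow hevensum, mul_one]
        exact le_of_lt h2
      · intro _ lam h0 h1
        have h2 := hq2 lam h0 h1
        rw [hexp, pow_add, Even.neg_one_pow hevensum, mul_one]
        exact h2
    · -- vanishing case
      refine ⟨0, ?_, ?_, ?_⟩
      · intro k hk
        rw [countB_zero E B k hV]
        simp
      · intro lam h0 h1
        simp
      · intro hBempty
        rw [hBempty] at hV
        exact absurd (NoV_empty E) hV
  choose qB hqB1 hqB2 hqB3 using hex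
  set q : Polynomial ℝ :=
    ∑ B ∈ Ebig.powerset.attach, C ((-1 : ℝ)^(B.1.card)) * qB B.1 B.2 with hq
  have hXq : ∀ k : ℕ, 0 < k → (X * q).eval (k : ℝ) = (countColorings E k : ℝ) := by
    intro k hk
    rw [inclusion_exclusion E hne k]
    rw [hq, Finset.mul_sum, eval_finset_sum]
    rw [← Finset.sum_attach (Ebig.powerset)
      (fun B => (-1:ℝ)^B.card * (Nat.card (monoSet E B k) : ℝ))]
    apply Finset.sum_congr rfl
    intro B _
    rw [show X * (C ((-1:ℝ)^(B.1.card)) * qB B.1 B.2) =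
      C ((-1:ℝ)^(B.1.card)) * (X * qB B.1 B.2) from by ring]
    rw [eval_mul, eval_C, hqB1 B.1 B.2 k hk]
  have hpq : p = X * q := by
    apply Polynomial.eq_of_infinite_eval_eq
    apply Set.infinite_of_injective_forall_mem (f := fun n : ℕ => ((n+1 : ℕ) : ℝ))
    · intro a b hab
      simp only at hab
      have h2 : (a + 1 : ℕ) = (b + 1 : ℕ) := by exact_mod_cast hab
      omega
    · intro n
      simp only [Set.mem_setOf_eq]
      rw [hp (n+1) (Nat.succ_pos n), hXq (n+1) (Nat.succ_pos n)]
  refine ⟨q, hpq, ?_⟩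
  intro lam h0 h1
  rw [hq, eval_finset_sum, Finset.mul_sum]
  apply Finset.sum_pos'
  · intro B _
    rw [eval_mul, eval_C]
    rw [show (-1:ℝ)^(Fintype.card α + 1) * ((-1:ℝ)^(B.1.card) * eval lam (qB B.1 B.2)) =
      (-1:ℝ)^(Fintype.card α + 1 + B.1.card) * eval lam (qB B.1 B.2) from by
        rw [pow_add]; ring]
    exact hqB2 B.1 B.2 lam h0 h1
  · refine ⟨⟨∅, Finset.empty_mem_powerset _⟩, Finset.mem_attach _ _, ?_⟩
    rw [eval_mul, eval_C]
    rw [show (-1:ℝ)^(Fintype.card α + 1) * ((-1:ℝ)^((∅ : Finset (Finset α)).card) *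
        eval lam (qB ∅ (Finset.empty_mem_powerset _))) =
      (-1:ℝ)^(Fintype.card α + 1 + (∅ : Finset (Finset α)).card) *
        eval lam (qB ∅ (Finset.empty_mem_powerset _)) from by rw [pow_add]; ring]
    exact hqB3 ∅ (Finset.empty_mem_powerset _) rfl lam h0 h1
end

section
/- Let H = (V, E) be a Sperner hypergraph in the family L0 and let e₀ ∈ E. Then every edge of the Sperner subhypergraph (H/e₀)* of the contraction H/e₀ belongs to the set {e ∈ E : e ∩ e₀ = ∅} ∪ {(e − e₀) ∪ {w} : e ∈ E, |e ∩ e₀| = 1}, where w is the new vertex of H/e₀. -/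
open Finset Polynomial

variable {α : Type}

lemma cm_none {α : Type} [DecidableEq α] {e₀ : Finset α} {a : α} :
    contractMap e₀ a = none ↔ a ∈ e₀ := by
  unfold contractMap; split_ifs with h <;> simp [h]

lemma imageEq {α : Type} [DecidableEq α] {e e₀ : Finset α} (h : (e ∩ e₀).Nonempty) :
    e.image (contractMap e₀) =
      insert (none : Option {v : α // v ∉ e₀}) ((e \ e₀).image (contractMap e₀)) := by
  obtain ⟨u, hu⟩ := h
  rw [Finset.mem_inter] at hu
  ext z
  match z with
  | none =>
    simp only [Finset.mem_insert, Finset.mem_image, true_or, iff_true]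
    exact ⟨u, hu.1, cm_none.mpr hu.2⟩
  | some b =>
    simp only [Finset.mem_insert, Finset.mem_image, Finset.mem_sdiff, contractMap]
    constructor
    · rintro ⟨a, ha, hab⟩
      split_ifs at hab with h'
      simp only [Option.some.injEq] at hab
      subst hab
      exact Or.inr ⟨a, ⟨ha, h'⟩, by simp [h']⟩
    · rintro (h' | ⟨a, ⟨ha, ha'⟩, hab⟩)
      · simp at h'
      · exact ⟨a, ha, by simp [ha'] at hab ⊢; exact hab⟩

lemma zmod2cases : ∀ z : ZMod 2, z = 0 ∨ z = 1 := by decide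

/-- If `H` is a Sperner hypergraph in `L0` and `e₀ ∈ E`, then every edge of the
Sperner subhypergraph `(H/e₀)*` is either an edge of `E` disjoint from `e₀`, or of the
form `(e − e₀) ∪ {w}` for some `e ∈ E` with `|e ∩ e₀| = 1` (here `w = none` is the
new vertex of `H/e₀`). -/
theorem stmt8 {α : Type} [Fintype α] [DecidableEq α] (E : Finset (Finset α))
    (hne : ∀ e ∈ E, e.Nonempty) (hSp : IsSperner E) (hE : MemL0 E)
    (e₀ : Finset α) (he₀ : e₀ ∈ E) :
    ∀ f ∈ minimalEdges (contractEdges E e₀),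
      (∃ e ∈ E, e ∩ e₀ = ∅ ∧ f = e.image (contractMap e₀)) ∨
      (∃ e ∈ E, (e ∩ e₀).card = 1 ∧
        f = insert (none : Option {v : α // v ∉ e₀}) ((e \ e₀).image (contractMap e₀))) := by
  intro f hf
  unfold minimalEdges at hf
  simp only [Finset.mem_filter] at hf
  obtain ⟨hfE, hmin⟩ := hf
  obtain ⟨e, he, rfl⟩ := Finset.mem_image.mp hfE
  rw [Finset.mem_erase] at he
  obtain ⟨hee₀, heE⟩ := he
  by_cases hint : e ∩ e₀ = ∅
  · exact Or.inl ⟨e, heE, hint, rfl⟩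
  · have hnon : (e ∩ e₀).Nonempty := Finset.nonempty_iff_ne_empty.mpr hint
    rcases Nat.lt_or_ge (e ∩ e₀).card 2 with hc | hc
    · have hc1 : (e ∩ e₀).card = 1 := by
        have := Finset.card_pos.mpr hnon; omega
      exact Or.inr ⟨e, heE, hc1, imageEq hnon⟩
    · obtain ⟨u, hu, v, hv, huv⟩ := Finset.one_lt_card.mp hc
      rw [Finset.mem_inter] at hu hv
      have h1 : (1 : ZMod 2) ≠ 0 := by decide
      set vf : ZMod 2 → α := fun i => if i = 0 then u else v with hvf
      set ef : ZMod 2 → Finset α := fun i => if i = 0 then e else e₀ with hef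
      have hcyc : IsCycle E 2 vf ef := by
        refine ⟨le_refl 2, ?_, ?_, ?_, ?_⟩
        · intro a b hab
          rcases zmod2cases a with rfl | rfl <;> rcases zmod2cases b with rfl | rfl
          · rfl
          · have h' : u = v := by simpa [hvf, h1] using hab
            exact absurd h' huv
          · have h' : u = v := by simpa [hvf, h1] using hab.symm
            exact absurd h' huv
          · rfl
        · intro a b hab
          rcases zmod2cases a with rfl | rfl <;> rcases zmod2cases b with rfl | rfl
          · rfl
          · have h' : e = e₀ := by simpa [hef, h1] using hab
            exact absurd h' hee₀
          · have h' : e = e₀ := by simpa [hef, h1] using hab.symm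
            exact absurd h' hee₀
          · rfl
        · intro i
          rcases zmod2cases i with rfl | rfl
          · simpa [hef] using heE
          · simpa [hef, h1] using he₀
        · intro i
          have h2 : (1 + 1 : ZMod 2) = 0 := by decide
          rcases zmod2cases i with rfl | rfl
          · constructor
            · simpa [hvf, hef] using hu.1
            · simpa [hvf, hef, h1] using hv.1
          · constructor
            · simpa [hvf, hef, h1] using hv.2
            · simpa [hvf, hef, h1, h2] using hu.2
      obtain ⟨x, y, hxy, ⟨i, hxi⟩, ⟨j, hyj⟩, hxyE⟩ := hE.2 2 vf ef hcyc
      have hmem : ∀ (k : ZMod 2) (z : α), z ∈ ef k → z ∈ e ∨ z ∈ e₀ := by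
        intro k z hz
        rcases zmod2cases k with rfl | rfl
        · left; simpa [hef] using hz
        · right; simpa [hef, h1] using hz
      have hx := hmem i x hxi
      have hy := hmem j y hyj
      have key : ∀ p q : α, p ≠ q → ({p, q} : Finset α) ∈ E → p ∉ e₀ →
          (p ∈ e ∨ p ∈ e₀) → (q ∈ e ∨ q ∈ e₀) →
          (∃ e' ∈ E, e' ∩ e₀ = ∅ ∧ e.image (contractMap e₀) = e'.image (contractMap e₀)) ∨
          (∃ e' ∈ E, (e' ∩ e₀).card = 1 ∧
            e.image (contractMap e₀) =
              insert (none : Option {v : α // v ∉ e₀}) ((e' \ e₀).image (contractMap e₀))) := by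
        intro p q hpq hpqE hp hpe hqe
        have hp_e : p ∈ e := hpe.resolve_right hp
        have hpq_ne : ({p, q} : Finset α) ≠ e₀ := by
          intro h
          exact hp (h ▸ Finset.mem_insert_self p {q})
        have hg : ({p, q} : Finset α).image (contractMap e₀) ∈ contractEdges E e₀ :=
          Finset.mem_image.mpr ⟨{p, q}, Finset.mem_erase.mpr ⟨hpq_ne, hpqE⟩, rfl⟩
        have hsub : ({p, q} : Finset α).image (contractMap e₀) ⊆ e.image (contractMap e₀) := by
          intro z hz
          obtain ⟨a, ha, rfl⟩ := Finset.mem_image.mp hz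
          rcases Finset.mem_insert.mp ha with rfl | ha
          · exact Finset.mem_image_of_mem _ hp_e
          · rw [Finset.mem_singleton] at ha
            subst ha
            rcases hqe with hq | hq
            · exact Finset.mem_image_of_mem _ hq
            · rw [cm_none.mpr hq]
              exact Finset.mem_image.mpr ⟨u, hu.1, cm_none.mpr hu.2⟩
        have heq := hmin _ hg hsub
        by_cases hq : q ∈ e₀
        · refine Or.inr ⟨{p, q}, hpqE, ?_, ?_⟩
          · have hi : ({p, q} : Finset α) ∩ e₀ = {q} := by
              ext z
              simp only [Finset.mem_inter, Finset.mem_insert, Finset.mem_singleton]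
              constructor
              · rintro ⟨rfl | rfl, hz⟩
                · exact absurd hz hp
                · rfl
              · rintro rfl; exact ⟨Or.inr rfl, hq⟩
            rw [hi]; rfl
          · rw [← heq]
            exact imageEq ⟨q, Finset.mem_inter.mpr
              ⟨Finset.mem_insert.mpr (Or.inr (Finset.mem_singleton_self q)), hq⟩⟩
        · refine Or.inl ⟨{p, q}, hpqE, ?_, heq.symm⟩
          ext z
          simp only [Finset.mem_inter, Finset.mem_insert, Finset.mem_singleton,
            Finset.notMem_empty, iff_false, not_and]
          rintro (rfl | rfl) <;> assumption
      by_cases hxe₀ : x ∈ e₀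
      · by_cases hye₀ : y ∈ e₀
        · exfalso
          have hsub : ({x, y} : Finset α) ⊆ e₀ := by
            intro z hz
            rcases Finset.mem_insert.mp hz with rfl | hz
            · exact hxe₀
            · rw [Finset.mem_singleton] at hz; subst hz; exact hye₀
          have hxy₀ := hSp _ hxyE _ he₀ hsub
          have hcard : e₀.card = 2 := by rw [← hxy₀]; exact Finset.card_pair hxy
          have huv₀ : ({u, v} : Finset α) ⊆ e₀ := by
            intro z hz
            rcases Finset.mem_insert.mp hz with rfl | hz
            · exact hu.2
            · rw [Finset.mem_singleton] at hz; subst hz; exact hv.2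
          have huve : ({u, v} : Finset α) = e₀ :=
            Finset.eq_of_subset_of_card_le huv₀ (by rw [hcard, Finset.card_pair huv])
          have he₀e : e₀ ⊆ e := by
            rw [← huve]
            intro z hz
            rcases Finset.mem_insert.mp hz with rfl | hz
            · exact hu.1
            · rw [Finset.mem_singleton] at hz; subst hz; exact hv.1
          exact hee₀ (hSp _ he₀ _ heE he₀e).symm
        · exact key y x hxy.symm (by rwa [Finset.pair_comm] at hxyE) hye₀ hy hx
      · exact key x y hxy hxyE hxe₀ hx hy
end

section
/- Let H = (V, E) be a Sperner hypergraph in the family L0 and let e₀ ∈ E be an edge with |e₀| > 2. Then the hypergraph H − e₀ = (V, E \ {e₀}) belongs to L0. -/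
open Finset Polynomial

variable {α : Type}

/-- If `H` is a Sperner hypergraph in `L0` and `e₀` is an edge with `|e₀| > 2`, then
`H − e₀ ∈ L0`. -/
theorem stmt9 {α : Type} [Fintype α] [DecidableEq α] (E : Finset (Finset α))
    (hne : ∀ e ∈ E, e.Nonempty) (hSp : IsSperner E) (hE : MemL0 E)
    (e₀ : Finset α) (he₀ : e₀ ∈ E) (hcard : 2 < e₀.card) :
    MemL0 (E.erase e₀) := by
  obtain ⟨heven, hcyc⟩ := hE
  constructor
  · intro e he; exact heven e (Finset.mem_of_mem_erase he)
  · intro t v es hC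
    obtain ⟨ht, hv, hes, hmem, hinc⟩ := hC
    obtain ⟨x, y, hxy, hx, hy, hpair⟩ :=
      hcyc t v es ⟨ht, hv, hes, fun i => Finset.mem_of_mem_erase (hmem i), hinc⟩
    refine ⟨x, y, hxy, hx, hy, Finset.mem_erase.mpr ⟨?_, hpair⟩⟩
    intro h; rw [← h] at hcard
    have : ({x, y} : Finset α).card ≤ 2 := Finset.card_insert_le _ _ |>.trans (by simp)
    omega
end

section
/- Let H = (V, E) be a Sperner hypergraph in the family L0 and let e₀ ∈ E be an edge with |e₀| > 2. Then the Sperner subhypergraph (H/e₀)* of the contraction H/e₀ belongs to L0. -/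
open Finset Polynomial

variable {α : Type}

section AuxStmt10

variable {α : Type} [DecidableEq α]

lemma aux_contractMap_eq_none {e₀ : Finset α} {v : α} (h : v ∈ e₀) :
    contractMap e₀ v = none := dif_pos h

lemma aux_contractMap_eq_some {e₀ : Finset α} {v : α} (h : v ∉ e₀) :
    contractMap e₀ v = some ⟨v, h⟩ := dif_neg h

lemma aux_contractMap_none_iff {e₀ : Finset α} {v : α} :
    contractMap e₀ v = none ↔ v ∈ e₀ := by
  unfold contractMap; split <;> simp_all

lemma aux_contractMap_some_eq {e₀ : Finset α} {v u : α} {h : u ∉ e₀}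
    (hv : contractMap e₀ v = some ⟨u, h⟩) : v = u := by
  unfold contractMap at hv
  split at hv
  · simp at hv
  · simpa using hv

lemma aux_some_mem_image {e₀ e' : Finset α} {u : α} {h : u ∉ e₀} :
    some ⟨u, h⟩ ∈ e'.image (contractMap e₀) ↔ u ∈ e' := by
  constructor
  · intro hm
    obtain ⟨w, hw, hwe⟩ := Finset.mem_image.mp hm
    exact aux_contractMap_some_eq hwe ▸ hw
  · intro hu
    exact aux_contractMap_eq_some h ▸ Finset.mem_image_of_mem _ hu

lemma aux_none_mem_image {e₀ e' : Finset α} :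
    (none ∈ e'.image (contractMap e₀)) ↔ ∃ w ∈ e', w ∈ e₀ := by
  constructor
  · intro hm
    obtain ⟨w, hw, hwe⟩ := Finset.mem_image.mp hm
    exact ⟨w, hw, aux_contractMap_none_iff.mp hwe⟩
  · rintro ⟨w, hw, hwe⟩
    exact aux_contractMap_eq_none hwe ▸ Finset.mem_image_of_mem _ hw

lemma aux_mem_contractEdges {E : Finset (Finset α)} {e₀ : Finset α}
    {f : Finset (Option {v : α // v ∉ e₀})} :
    f ∈ contractEdges E e₀ ↔ ∃ e' ∈ E, e' ≠ e₀ ∧ f = e'.image (contractMap e₀) := by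
  unfold contractEdges
  simp only [Finset.mem_image, Finset.mem_erase]
  constructor
  · rintro ⟨e', ⟨hne, hE⟩, rfl⟩; exact ⟨e', hE, hne, rfl⟩
  · rintro ⟨e', hE, hne, rfl⟩; exact ⟨e', ⟨hne, hE⟩, rfl⟩

lemma aux_mem_minimalEdges {F : Finset (Finset α)} {f : Finset α} :
    f ∈ minimalEdges F ↔ f ∈ F ∧ ∀ g ∈ F, g ⊆ f → g = f := by
  unfold minimalEdges
  rw [Finset.mem_filter]

/-- Every edge of the contraction (of a Sperner hypergraph with even edges)
has at least two vertices. -/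
lemma aux_two_le_card {E : Finset (Finset α)} (hne : ∀ e ∈ E, e.Nonempty)
    (hSp : IsSperner E) (hEeven : ∀ e ∈ E, Even e.card) {e₀ : Finset α}
    (he₀ : e₀ ∈ E)
    {f : Finset (Option {v : α // v ∉ e₀})} (hf : f ∈ contractEdges E e₀) :
    2 ≤ f.card := by
  obtain ⟨e', he'E, he'ne, rfl⟩ := aux_mem_contractEdges.mp hf
  by_contra hlt
  push_neg at hlt
  have hfne : (e'.image (contractMap e₀)).Nonempty :=
    (hne e' he'E).image _
  have hcard1 : (e'.image (contractMap e₀)).card = 1 := by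
    have := Finset.card_pos.mpr hfne
    omega
  obtain ⟨z, hz⟩ := Finset.card_eq_one.mp hcard1
  have hall : ∀ w ∈ e', contractMap e₀ w = z := by
    intro w hw
    have := Finset.mem_image_of_mem (contractMap e₀) hw
    rw [hz, Finset.mem_singleton] at this
    exact this
  match z with
  | none =>
    have hsub : e' ⊆ e₀ := fun w hw => aux_contractMap_none_iff.mp (hall w hw)
    exact he'ne (hSp e' he'E e₀ he₀ hsub)
  | some ⟨u, hu⟩ =>
    have hsub : e' ⊆ {u} := fun w hw =>
      Finset.mem_singleton.mpr (aux_contractMap_some_eq (hall w hw))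
    have h1 : e'.card = 1 := le_antisymm
      (le_trans (Finset.card_le_card hsub) (by simp))
      (Finset.card_pos.mpr (hne e' he'E))
    have := hEeven e' he'E
    rw [h1] at this
    exact Nat.not_even_one this

/-- A pair edge `{x, y}` of `E` (with not both endpoints in `e₀`) contracts to a
pair edge of the contraction, which is automatically a minimal edge. -/
lemma aux_pair_minimal {E : Finset (Finset α)} (hne : ∀ e ∈ E, e.Nonempty)
    (hSp : IsSperner E) (hEeven : ∀ e ∈ E, Even e.card) {e₀ : Finset α}
    (he₀ : e₀ ∈ E) (hcard : 2 < e₀.card) {x y : α} (hxy : x ≠ y)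
    (hg : ({x, y} : Finset α) ∈ E) :
    contractMap e₀ x ≠ contractMap e₀ y ∧
      ({contractMap e₀ x, contractMap e₀ y} :
        Finset (Option {v : α // v ∉ e₀})) ∈ minimalEdges (contractEdges E e₀) := by
  have hxycard : ({x, y} : Finset α).card = 2 := Finset.card_pair hxy
  have hnboth : ¬(x ∈ e₀ ∧ y ∈ e₀) := by
    rintro ⟨hx, hy⟩
    have hsub : ({x, y} : Finset α) ⊆ e₀ := by
      intro w hw
      rcases Finset.mem_insert.mp hw with rfl | hw
      · exact hx
      · exact (Finset.mem_singleton.mp hw) ▸ hy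
    have := hSp _ hg e₀ he₀ hsub
    rw [← this] at hcard
    omega
  have hgne : ({x, y} : Finset α) ≠ e₀ := by
    intro h; rw [h] at hxycard; omega
  have hcmne : contractMap e₀ x ≠ contractMap e₀ y := by
    by_cases hx : x ∈ e₀ <;> by_cases hy : y ∈ e₀
    · exact absurd ⟨hx, hy⟩ hnboth
    · rw [aux_contractMap_eq_none hx, aux_contractMap_eq_some hy]; simp
    · rw [aux_contractMap_eq_none hy, aux_contractMap_eq_some hx]; simp
    · rw [aux_contractMap_eq_some hx, aux_contractMap_eq_some hy]
      simp [hxy]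
  refine ⟨hcmne, ?_⟩
  have himg : ({x, y} : Finset α).image (contractMap e₀) =
      {contractMap e₀ x, contractMap e₀ y} := by
    rw [Finset.image_insert, Finset.image_singleton]
  have hmem : ({contractMap e₀ x, contractMap e₀ y} :
      Finset (Option {v : α // v ∉ e₀})) ∈ contractEdges E e₀ :=
    aux_mem_contractEdges.mpr ⟨{x, y}, hg, hgne, himg.symm⟩
  rw [aux_mem_minimalEdges]
  refine ⟨hmem, ?_⟩
  intro f' hf' hsub
  apply Finset.eq_of_subset_of_card_le hsub
  have h2 : ({contractMap e₀ x, contractMap e₀ y} :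
      Finset (Option {v : α // v ∉ e₀})).card = 2 := Finset.card_pair hcmne
  rw [h2]
  exact aux_two_le_card hne hSp hEeven he₀ hf'

/-- From two distinct edges sharing two vertices, `L0` produces a pair edge
located in their union. -/
lemma aux_two_cycle_pair {E : Finset (Finset α)} (hE : MemL0 E)
    {e' e₀ : Finset α} (he' : e' ∈ E) (he₀ : e₀ ∈ E) (hnee : e' ≠ e₀)
    {p q : α} (hp : p ∈ e' ∩ e₀) (hq : q ∈ e' ∩ e₀) (hpq : p ≠ q) :
    ∃ x y : α, x ≠ y ∧ (x ∈ e' ∨ x ∈ e₀) ∧ (y ∈ e' ∨ y ∈ e₀) ∧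
      ({x, y} : Finset α) ∈ E := by
  have h2 : ∀ k : ZMod 2, k = 0 ∨ k = 1 := by decide
  have h10 : (1 : ZMod 2) ≠ 0 := by decide
  have h110 : (1 + 1 : ZMod 2) = 0 := by decide
  have hp' := Finset.mem_inter.mp hp
  have hq' := Finset.mem_inter.mp hq
  have hcyc : IsCycle E 2 (fun i => if i = 0 then p else q)
      (fun i => if i = 0 then e' else e₀) := by
    refine ⟨le_refl 2, ?_, ?_, ?_, ?_⟩
    · intro i j hij
      rcases h2 i with rfl | rfl <;> rcases h2 j with rfl | rfl <;>
        simp only [if_pos rfl, if_neg h10] at hij <;> first | rfl | exact absurd hij hpq | exact absurd hij.symm hpq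
    · intro i j hij
      rcases h2 i with rfl | rfl <;> rcases h2 j with rfl | rfl <;>
        simp only [if_pos rfl, if_neg h10] at hij <;>
        first | rfl | exact absurd hij hnee | exact absurd hij.symm hnee
    · intro i
      rcases h2 i with rfl | rfl
      · simpa using he'
      · simpa [h10] using he₀
    · intro i
      rcases h2 i with rfl | rfl
      · constructor
        · simpa using hp'.1
        · simpa [h10] using hq'.1
      · constructor
        · simpa [h10] using hq'.2
        · simpa [h110] using hp'.2
  obtain ⟨x, y, hxy, ⟨i, hxi⟩, ⟨j, hyj⟩, hgE⟩ := hE.2 2 _ _ hcyc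
  refine ⟨x, y, hxy, ?_, ?_, hgE⟩
  · rcases h2 i with rfl | rfl
    · left; simpa using hxi
    · right; simpa [h10] using hxi
  · rcases h2 j with rfl | rfl
    · left; simpa using hyj
    · right; simpa [h10] using hyj

/-- Insert the two vertices `a, b ∈ e₀` and the edge `e₀` into a "broken cycle",
obtaining a genuine cycle of length `t + 1` in `E`. -/
lemma aux_insert_cycle {E : Finset (Finset α)} {e₀ : Finset α} (he₀ : e₀ ∈ E)
    {t : ℕ} (ht : 2 ≤ t) {i₀ : ZMod t} {u : ZMod t → α} {e' : ZMod t → Finset α}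
    (he'E : ∀ i, e' i ∈ E) (he'ne : ∀ i, e' i ≠ e₀)
    (he'inj : Function.Injective e')
    (huinj : ∀ i j, i ≠ i₀ → j ≠ i₀ → u i = u j → i = j)
    (hue₀ : ∀ i, i ≠ i₀ → u i ∉ e₀)
    (humem : ∀ i, i ≠ i₀ → u i ∈ e' i)
    (humem' : ∀ i, i + 1 ≠ i₀ → u (i + 1) ∈ e' i)
    {a b : α} (ha : a ∈ e' i₀) (ha₀ : a ∈ e₀) (hb : b ∈ e' (i₀ - 1)) (hb₀ : b ∈ e₀)
    (hab : a ≠ b) :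
    ∃ (T : ℕ) (w : ZMod T → α) (F : ZMod T → Finset α), IsCycle E T w F ∧
      ∀ j, F j = e₀ ∨ ∃ i, F j = e' i := by
  have htz : NeZero t := ⟨by omega⟩
  have hT : NeZero (t + 1) := ⟨by omega⟩
  haveI : Fact (1 < t + 1) := ⟨by omega⟩
  set idx : ℕ → ZMod t := fun k => i₀ + 1 + (k : ZMod t) with hidx_def
  have hcast : ∀ k k' : ℕ, k < t → k' < t → ((k : ZMod t) = (k' : ZMod t)) → k = k' := by
    intro k k' hk hk' h
    have := congrArg ZMod.val h
    rwa [ZMod.val_cast_of_lt hk, ZMod.val_cast_of_lt hk'] at this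
  have hidx_inj : ∀ k k' : ℕ, k < t → k' < t → idx k = idx k' → k = k' := by
    intro k k' hk hk' h
    exact hcast k k' hk hk' (add_left_cancel h)
  have hidx_ne : ∀ k : ℕ, k < t - 1 → idx k ≠ i₀ := by
    intro k hk h
    have h2 : ((1 + k : ℕ) : ZMod t) = ((0 : ℕ) : ZMod t) := by
      push_cast
      have h3 : i₀ + (1 + (k : ZMod t)) = i₀ + 0 := by
        rw [add_zero, ← add_assoc]; exact h
      exact add_left_cancel h3
    have := hcast _ _ (by omega) (by omega) h2
    omega
  have hidx_succ : ∀ k : ℕ, idx k + 1 = idx (k + 1) := by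
    intro k; simp only [hidx_def]; push_cast; ring
  have hidx_zero : idx 0 = i₀ + 1 := by
    simp only [hidx_def]; push_cast; ring
  have hidx_last : idx (t - 2) = i₀ - 1 := by
    have h1 : ((t - 1 : ℕ) : ZMod t) = -1 := by
      have h0 : ((t - 1 : ℕ) : ZMod t) + 1 = 0 := by
        rw [show ((t - 1 : ℕ) : ZMod t) + 1 = ((t - 1 + 1 : ℕ) : ZMod t) by push_cast; ring,
          show t - 1 + 1 = t by omega, ZMod.natCast_self]
      linear_combination h0
    show i₀ + 1 + ((t - 2 : ℕ) : ZMod t) = i₀ - 1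
    have h2 : (1 : ZMod t) + ((t - 2 : ℕ) : ZMod t) = ((t - 1 : ℕ) : ZMod t) := by
      rw [show ((t - 1 : ℕ) : ZMod t) = ((1 + (t - 2) : ℕ) : ZMod t) by congr 1; omega]
      push_cast; ring
    rw [add_assoc, h2, h1]; ring
  have hvlt : ∀ j : ZMod (t + 1), j.val < t + 1 := fun j => ZMod.val_lt j
  have hval1 : (1 : ZMod (t + 1)).val = 1 := ZMod.val_one (t + 1)
  have hsucc : ∀ j : ZMod (t + 1), j.val ≠ t → (j + 1).val = j.val + 1 := by
    intro j hj
    rw [ZMod.val_add, hval1, Nat.mod_eq_of_lt (by have := hvlt j; omega)]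
  have hsucc_top : ∀ j : ZMod (t + 1), j.val = t → (j + 1).val = 0 := by
    intro j hj
    rw [ZMod.val_add, hval1, hj, Nat.mod_self]
  have hvalinj : ∀ j j' : ZMod (t + 1), j.val = j'.val → j = j' := by
    intro j j' h
    have := congrArg (Nat.cast : ℕ → ZMod (t + 1)) h
    rwa [ZMod.natCast_val, ZMod.natCast_val, ZMod.cast_id, ZMod.cast_id] at this
  classical
  refine ⟨t + 1,
    (fun j => if j.val = t then a else if j.val = t - 1 then b else u (idx j.val)),
    (fun j => if j.val = t then e' i₀ else if j.val = t - 1 then e₀ else e' (idx j.val)),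
    ⟨by omega, ?_, ?_, ?_, ?_⟩, ?_⟩
  · -- injectivity of vertices
    intro j j' h
    simp only at h
    have hj := hvlt j
    have hj' := hvlt j'
    split_ifs at h with c1 c2 c3 c4 c5 c6 c7 c8
    · exact hvalinj _ _ (c1.trans c2.symm)
    · exact absurd h hab
    · exact absurd (h ▸ ha₀) (hue₀ _ (hidx_ne _ (by omega)))
    · exact absurd h.symm hab
    · exact hvalinj _ _ (c4.trans c6.symm)
    · exact absurd (h ▸ hb₀) (hue₀ _ (hidx_ne _ (by omega)))
    · exact absurd (h.symm ▸ ha₀) (hue₀ _ (hidx_ne _ (by omega)))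
    · exact absurd (h.symm ▸ hb₀) (hue₀ _ (hidx_ne _ (by omega)))
    · have h9 := huinj _ _ (hidx_ne _ (by omega)) (hidx_ne _ (by omega)) h
      exact hvalinj _ _ (hidx_inj _ _ (by omega) (by omega) h9)
  · -- injectivity of edges
    intro j j' h
    simp only at h
    have hj := hvlt j
    have hj' := hvlt j'
    split_ifs at h with c1 c2 c3 c4 c5 c6 c7 c8
    · exact hvalinj _ _ (c1.trans c2.symm)
    · exact absurd h (he'ne _)
    · exact absurd (he'inj h).symm (hidx_ne _ (by omega))
    · exact absurd h.symm (he'ne _)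
    · exact hvalinj _ _ (c4.trans c6.symm)
    · exact absurd h.symm (he'ne _)
    · exact absurd (he'inj h) (hidx_ne _ (by omega))
    · exact absurd h (he'ne _)
    · exact hvalinj _ _ (hidx_inj _ _ (by omega) (by omega) (he'inj h))
  · -- edges belong to E
    intro j
    simp only
    split_ifs
    · exact he'E _
    · exact he₀
    · exact he'E _
  · -- incidence
    intro j
    have hj := hvlt j
    by_cases h1 : j.val = t
    · have hs := hsucc_top j h1
      constructor
      · simp only [if_pos h1]; exact ha
      · simp only [if_pos h1, hs]
        rw [if_neg (by omega), if_neg (by omega), hidx_zero]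
        exact humem' i₀ (by
          intro hcon
          have : (1 : ZMod t) = 0 := by
            have h3 : i₀ + 1 = i₀ + 0 := by rw [add_zero]; exact hcon
            exact add_left_cancel h3
          have := hcast 1 0 (by omega) (by omega) (by push_cast; exact this)
          omega)
    · by_cases h2 : j.val = t - 1
      · have hs := hsucc j h1
        constructor
        · simp only [if_neg h1, if_pos h2]; exact hb₀
        · simp only [if_neg h1, if_pos h2, hs]
          rw [if_pos (by omega)]
          exact ha₀
      · have hs := hsucc j h1
        have hklt : j.val < t - 1 := by omega
        constructor
        · simp only [if_neg h1, if_neg h2]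
          exact humem _ (hidx_ne _ hklt)
        · simp only [if_neg h1, if_neg h2, hs]
          by_cases h3 : j.val + 1 = t - 1
          · rw [if_neg (by omega), if_pos h3]
            have : idx j.val = i₀ - 1 := by
              rw [show j.val = t - 2 by omega]; exact hidx_last
            rw [this]; exact hb
          · rw [if_neg (by omega), if_neg h3, ← hidx_succ]
            exact humem' (idx j.val) (by
              rw [hidx_succ]
              exact hidx_ne _ (by omega))
  · -- classification of the edges
    intro j
    simp only
    split_ifs
    · right; exact ⟨i₀, rfl⟩
    · left; rfl
    · right; exact ⟨idx j.val, rfl⟩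

end AuxStmt10

/-- If `H` is a Sperner hypergraph in `L0` and `e₀` is an edge with `|e₀| > 2`, then
the Sperner subhypergraph `(H/e₀)*` of the contraction belongs to `L0`. -/
theorem stmt10 {α : Type} [Fintype α] [DecidableEq α] (E : Finset (Finset α))
    (hne : ∀ e ∈ E, e.Nonempty) (hSp : IsSperner E) (hE : MemL0 E)
    (e₀ : Finset α) (he₀ : e₀ ∈ E) (hcard : 2 < e₀.card) :
    MemL0 (minimalEdges (contractEdges E e₀)) := by
  classical
  have hEeven := hE.1
  have hEcyc := hE.2
  constructor
  · -- every minimal contracted edge has even cardinality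
    intro f hf
    obtain ⟨hf1, hfmin⟩ := aux_mem_minimalEdges.mp hf
    obtain ⟨e', he'E, he'ne, hfeq⟩ := aux_mem_contractEdges.mp hf1
    rcases Nat.lt_or_ge (e' ∩ e₀).card 2 with hk | hk
    · -- |e' ∩ e₀| ≤ 1 : the contracted edge has the same cardinality as e'
      have hinj2 : Set.InjOn (contractMap e₀) (e' \ e₀ : Finset α) := by
        intro w hw w' hw' hww
        have hwn : w ∉ e₀ := (Finset.mem_sdiff.mp hw).2
        have hw'n : w' ∉ e₀ := (Finset.mem_sdiff.mp hw').2
        rw [aux_contractMap_eq_some hwn, aux_contractMap_eq_some hw'n] at hww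
        simpa using hww
      have hinj1 : Set.InjOn (contractMap e₀) (e' ∩ e₀ : Finset α) := by
        intro w hw w' hw' _
        exact Finset.card_le_one.mp (by omega) _ hw _ hw'
      have himg : f = ((e' \ e₀).image (contractMap e₀)) ∪
          ((e' ∩ e₀).image (contractMap e₀)) := by
        rw [hfeq, ← Finset.image_union, Finset.sdiff_union_inter]
      have hdisj : Disjoint ((e' \ e₀).image (contractMap e₀))
          ((e' ∩ e₀).image (contractMap e₀)) := by
        rw [Finset.disjoint_left]
        rintro z hz1 hz2
        obtain ⟨w, hw, rfl⟩ := Finset.mem_image.mp hz1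
        obtain ⟨w', hw', he'⟩ := Finset.mem_image.mp hz2
        rw [aux_contractMap_eq_none (Finset.mem_inter.mp hw').2,
          aux_contractMap_eq_some (Finset.mem_sdiff.mp hw).2] at he'
        simp at he'
      have hcardf : f.card = (e' \ e₀).card + (e' ∩ e₀).card := by
        rw [himg, Finset.card_union_of_disjoint hdisj,
          Finset.card_image_of_injOn hinj2, Finset.card_image_of_injOn hinj1]
      have htot := Finset.card_sdiff_add_card_inter e' e₀
      have : f.card = e'.card := by omega
      rw [this]
      exact hEeven e' he'E
    · -- |e' ∩ e₀| ≥ 2 : minimality forces the contracted edge to be a pair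
      obtain ⟨p, hp, q, hq, hpq⟩ := Finset.one_lt_card.mp hk
      obtain ⟨x, y, hxy, hx, hy, hgE⟩ := aux_two_cycle_pair hE he'E he₀ he'ne hp hq hpq
      obtain ⟨hcmne, hpmin⟩ := aux_pair_minimal hne hSp hEeven he₀ hcard hxy hgE
      have hpce : ({contractMap e₀ x, contractMap e₀ y} :
          Finset (Option {v : α // v ∉ e₀})) ∈ contractEdges E e₀ :=
        (aux_mem_minimalEdges.mp hpmin).1
      have hponce : (none : Option {v : α // v ∉ e₀}) ∈ f := by
        rw [hfeq]
        exact aux_none_mem_image.mpr ⟨p, (Finset.mem_inter.mp hp).1,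
          (Finset.mem_inter.mp hp).2⟩
      have hsub : ({contractMap e₀ x, contractMap e₀ y} :
          Finset (Option {v : α // v ∉ e₀})) ⊆ f := by
        intro z hz
        rcases Finset.mem_insert.mp hz with rfl | hz
        · rcases hx with hx | hx
          · rw [hfeq]; exact Finset.mem_image_of_mem _ hx
          · rw [aux_contractMap_eq_none hx]; exact hponce
        · rw [Finset.mem_singleton] at hz; subst hz
          rcases hy with hy | hy
          · rw [hfeq]; exact Finset.mem_image_of_mem _ hy
          · rw [aux_contractMap_eq_none hy]; exact hponce
      have hfp := hfmin _ hpce hsub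
      rw [← hfp, Finset.card_pair hcmne]
      exact even_two
  · -- the cycle condition
    intro t v es hcyc
    obtain ⟨ht2, hvinj, hesinj, hesM, hinc⟩ := hcyc
    have hch : ∀ i, ∃ e'', e'' ∈ E ∧ e'' ≠ e₀ ∧ es i = e''.image (contractMap e₀) :=
      fun i => aux_mem_contractEdges.mp (aux_mem_minimalEdges.mp (hesM i)).1
    choose e' he'E he'ne hes using hch
    have he'inj : Function.Injective e' := by
      intro i j hij
      apply hesinj
      rw [hes i, hes j, hij]
    have hlocate : ∀ x : α, (∃ i, x ∈ e' i) → ∃ i, contractMap e₀ x ∈ es i := by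
      rintro x ⟨i, hxi⟩
      exact ⟨i, by rw [hes i]; exact Finset.mem_image_of_mem _ hxi⟩
    have htrans : ∀ x y : α, x ≠ y → ({x, y} : Finset α) ∈ E →
        (∃ i, contractMap e₀ x ∈ es i) → (∃ i, contractMap e₀ y ∈ es i) →
        ∃ x' y' : Option {v : α // v ∉ e₀}, x' ≠ y' ∧ (∃ i, x' ∈ es i) ∧
          (∃ j, y' ∈ es j) ∧
          ({x', y'} : Finset (Option {v : α // v ∉ e₀})) ∈
            minimalEdges (contractEdges E e₀) := by
      intro x y hxy hgE hx hy
      obtain ⟨hcmne, hpmin⟩ := aux_pair_minimal hne hSp hEeven he₀ hcard hxy hgE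
      exact ⟨_, _, hcmne, hx, hy, hpmin⟩
    by_cases hB : ∃ i₀, v i₀ = none
    · -- the cycle passes through the contracted vertex
      obtain ⟨i₀, hi₀⟩ := hB
      have hvnone : ∀ i, i ≠ i₀ → v i ≠ none := by
        intro i hi hcon
        exact hi (hvinj (hcon.trans hi₀.symm))
      have hnonei : (none : Option {v : α // v ∉ e₀}) ∈ es i₀ := hi₀ ▸ (hinc i₀).1
      obtain ⟨a, ha, ha₀⟩ : ∃ w ∈ e' i₀, w ∈ e₀ := by
        apply aux_none_mem_image.mp
        rw [← hes i₀]; exact hnonei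
      obtain ⟨b, hb, hb₀⟩ : ∃ w ∈ e' (i₀ - 1), w ∈ e₀ := by
        apply aux_none_mem_image.mp
        rw [← hes (i₀ - 1)]
        have h2 := (hinc (i₀ - 1)).2
        rwa [sub_add_cancel, hi₀] at h2
      have hchu : ∀ i, ∃ x : α, i ≠ i₀ → ∃ h : x ∉ e₀, v i = some ⟨x, h⟩ := by
        intro i
        by_cases hi : i = i₀
        · exact ⟨a, fun h => absurd hi h⟩
        · cases hv : v i with
          | none => exact absurd hv (hvnone i hi)
          | some s => exact ⟨s.1, fun _ => ⟨s.2, rfl⟩⟩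
      choose u hu using hchu
      have hue₀ : ∀ i, i ≠ i₀ → u i ∉ e₀ := fun i hi => (hu i hi).choose
      have hvu : ∀ i (hi : i ≠ i₀), v i = some ⟨u i, hue₀ i hi⟩ := by
        intro i hi
        obtain ⟨h, hh⟩ := hu i hi
        exact hh
      have huinj : ∀ i j, i ≠ i₀ → j ≠ i₀ → u i = u j → i = j := by
        intro i j hi hj hij
        apply hvinj
        rw [hvu i hi, hvu j hj]
        exact congrArg some (Subtype.ext hij)
      have humem : ∀ i, i ≠ i₀ → u i ∈ e' i := by
        intro i hi
        have h1 := (hinc i).1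
        rw [hvu i hi, hes i] at h1
        exact aux_some_mem_image.mp h1
      have humem' : ∀ i, i + 1 ≠ i₀ → u (i + 1) ∈ e' i := by
        intro i hi
        have h1 := (hinc i).2
        rw [hvu (i + 1) hi, hes i] at h1
        exact aux_some_mem_image.mp h1
      by_cases hab : a = b
      · -- replace the contracted vertex by `a` itself
        have hcyc2 : IsCycle E t (fun i => if i = i₀ then a else u i) e' := by
          refine ⟨ht2, ?_, he'inj, he'E, ?_⟩
          · intro i j hij
            simp only at hij
            by_cases hi : i = i₀ <;> by_cases hj : j = i₀
            · rw [hi, hj]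
            · rw [if_pos hi, if_neg hj] at hij
              exact absurd (hij ▸ ha₀) (hue₀ j hj)
            · rw [if_neg hi, if_pos hj] at hij
              exact absurd (hij.symm ▸ ha₀) (hue₀ i hi)
            · rw [if_neg hi, if_neg hj] at hij
              exact huinj i j hi hj hij
          · intro i
            constructor
            · simp only
              by_cases hi : i = i₀
              · rw [if_pos hi, hi]; exact ha
              · rw [if_neg hi]; exact humem i hi
            · simp only
              by_cases hi : i + 1 = i₀
              · rw [if_pos hi]
                have : i = i₀ - 1 := by rw [← hi]; ring
                rw [this, hab]
                exact hb
              · rw [if_neg hi]; exact humem' i hi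
        obtain ⟨x, y, hxy, ⟨i, hxi⟩, ⟨j, hyj⟩, hgE⟩ := hEcyc t _ e' hcyc2
        exact htrans x y hxy hgE (hlocate x ⟨i, hxi⟩) (hlocate y ⟨j, hyj⟩)
      · -- route the cycle through `e₀` via the two distinct vertices `a, b`
        obtain ⟨T, w, F, hcycT, hclass⟩ := aux_insert_cycle he₀ ht2 he'E he'ne
          he'inj huinj hue₀ humem humem' ha ha₀ hb hb₀ hab
        obtain ⟨x, y, hxy, ⟨jx, hxj⟩, ⟨jy, hyj⟩, hgE⟩ := hEcyc T w F hcycT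
        have hlocx : ∀ z : α, (∃ j, z ∈ F j) → ∃ i, contractMap e₀ z ∈ es i := by
          rintro z ⟨jz, hzj⟩
          rcases hclass jz with hF | ⟨i, hF⟩
          · rw [hF] at hzj
            exact ⟨i₀, by rw [aux_contractMap_eq_none hzj]; exact hnonei⟩
          · rw [hF] at hzj
            exact hlocate z ⟨i, hzj⟩
        exact htrans x y hxy hgE (hlocx x ⟨jx, hxj⟩) (hlocx y ⟨jy, hyj⟩)
    · -- the cycle avoids the contracted vertex: lift it directly
      push_neg at hB
      have hchu : ∀ i, ∃ x : α, ∃ h : x ∉ e₀, v i = some ⟨x, h⟩ := by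
        intro i
        cases hv : v i with
        | none => exact absurd hv (hB i)
        | some s => exact ⟨s.1, s.2, rfl⟩
      choose u hu using hchu
      have hue₀ : ∀ i, u i ∉ e₀ := fun i => (hu i).choose
      have hvu : ∀ i, v i = some ⟨u i, hue₀ i⟩ := by
        intro i
        obtain ⟨h, hh⟩ := hu i
        exact hh
      have huinj : Function.Injective u := by
        intro i j hij
        apply hvinj
        rw [hvu i, hvu j]
        exact congrArg some (Subtype.ext hij)
      have humem : ∀ i, u i ∈ e' i := by
        intro i
        have h1 := (hinc i).1
        rw [hvu i, hes i] at h1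
        exact aux_some_mem_image.mp h1
      have humem' : ∀ i, u (i + 1) ∈ e' i := by
        intro i
        have h1 := (hinc i).2
        rw [hvu (i + 1), hes i] at h1
        exact aux_some_mem_image.mp h1
      have hcyc2 : IsCycle E t u e' :=
        ⟨ht2, huinj, he'inj, he'E, fun i => ⟨humem i, humem' i⟩⟩
      obtain ⟨x, y, hxy, ⟨i, hxi⟩, ⟨j, hyj⟩, hgE⟩ := hEcyc t u e' hcyc2
      exact htrans x y hxy hgE (hlocate x ⟨i, hxi⟩) (hlocate y ⟨j, hyj⟩)
end

section
/- Let H = (V, E) be a Sperner hypergraph in the family L0' and let e₀ ∈ E be an edge with |e₀| > 2. Then the hypergraph H − e₀ = (V, E \ {e₀}) belongs to L0'. -/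
open Finset Polynomial

variable {α : Type}

/-- If `H` is a Sperner hypergraph in `L0'` and `e₀` is an edge with `|e₀| > 2`, then
`H − e₀ ∈ L0'`. -/
theorem stmt13 {α : Type} [Fintype α] [DecidableEq α] (E : Finset (Finset α))
    (hne : ∀ e ∈ E, e.Nonempty) (hSp : IsSperner E) (hE : MemL0' E)
    (e₀ : Finset α) (he₀ : e₀ ∈ E) (hcard : 2 < e₀.card) :
    MemL0' (E.erase e₀) := by
  obtain ⟨⟨heven, hcyc⟩, hconn⟩ := hE
  constructor
  · constructor
    · intro e he; exact heven e (Finset.mem_of_mem_erase he)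
    · intro t v es hc
      obtain ⟨ht, hv, he, hmem, hvm⟩ := hc
      obtain ⟨x, y, hxy, hx, hy, hE2⟩ :=
        hcyc t v es ⟨ht, hv, he, fun i => Finset.mem_of_mem_erase (hmem i), hvm⟩
      refine ⟨x, y, hxy, hx, hy, Finset.mem_erase.2 ⟨?_, hE2⟩⟩
      intro h
      have h2 : ({x, y} : Finset α).card = 2 := Finset.card_pair hxy
      rw [h] at h2
      omega
  · have heq : (E.erase e₀).filter (fun e => e.card = 2)
        = E.filter (fun e => e.card = 2) := by
      ext e
      simp only [Finset.mem_filter, Finset.mem_erase]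
      constructor
      · rintro ⟨⟨-, h1⟩, h2⟩; exact ⟨h1, h2⟩
      · rintro ⟨h1, h2⟩
        refine ⟨⟨?_, h1⟩, h2⟩
        rintro rfl; omega
    rw [heq]
    exact hconn
end
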